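/- arXiv:math/0503728 — 6 statements merged into one kernel-verified Lean document; each statement's English description precedes it below -/
import Mathlib

section
/- Let w : ℕ → (0,∞) be a weight function satisfying condition (M), with Malthusian parameter λ*, and suppose in addition that w(n) → ∞ as n → ∞. Let (X_i)_{i≥0} be independent random variables with X_i exponentially distributed with rate w(i), and set σ_k = X_0 + ⋯ + X_{k−1} for k ≥ 1. Then E[(Σ_{k=1}^∞ e^{−λ* σ_k})²] < ∞; in particular E[ξ̂(λ*) log⁺ ξ̂(λ*)] < ∞, where ξ̂(λ*) = Σ_{k=1}^∞ e^{−λ* σ_k} (condition (L)). -/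
open scoped Classical BigOperators ENNReal

/-- Vertices of rooted ordered trees: finite sequences of positive integers,
encoded as lists of natural numbers (entries are forced to be `≥ 1` by the
tree property below). -/
abbrev Vertex : Type := List ℕ

/-- `G` is a rooted ordered tree: it contains the root `[]` and, together with
any vertex `x = (x₁,…,x_k) ≠ ∅` (whose last entry is positive), it contains
the parent `(x₁,…,x_{k−1})` and, if `x_k > 1`, also `(x₁,…,x_{k−1},x_k−1)`. -/
def IsROTree (G : Finset Vertex) : Prop :=
  ([] : Vertex) ∈ G ∧
    ∀ y ∈ G, y ≠ ([] : Vertex) →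
      1 ≤ y.getLastD 0 ∧ y.dropLast ∈ G ∧
        (1 < y.getLastD 0 → y.dropLast ++ [y.getLastD 0 - 1] ∈ G)

/-- `deg(x,G)`: the number of children of `x` in `G`. -/
def degree (x : Vertex) (G : Finset Vertex) : ℕ :=
  (G.filter fun y => y ≠ ([] : Vertex) ∧ y.dropLast = x).card

/-- the subtree of `G` rooted at `x`, i.e. `{y : x · y ∈ G}` -/
def subtreeAt (G : Finset Vertex) (x : Vertex) : Finset Vertex :=
  (G.filter fun z => x <+: z).image fun z => z.drop x.length

/-- the total weight `W(G) = Σ_{y∈G} w(deg(y,G))` -/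
noncomputable def totalWeight (w : ℕ → ℝ) (G : Finset Vertex) : ℝ :=
  ∑ x ∈ G, w (degree x G)

/-- the Laplace transform `ρ̂(λ) = Σ_{k≥1} Π_{i=0}^{k−1} w(i)/(λ+w(i)) ∈ (0,∞]` -/
noncomputable def lapRho (w : ℕ → ℝ) (lam : ℝ) : ℝ≥0∞ :=
  ∑' k : ℕ, ∏ i ∈ Finset.range (k + 1), ENNReal.ofReal (w i / (lam + w i))

/-- `λ̲ = inf {λ > 0 : ρ̂(λ) < ∞}` -/
noncomputable def lowerLam (w : ℕ → ℝ) : ℝ :=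
  sInf {lam : ℝ | 0 < lam ∧ lapRho w lam ≠ ∞}

/-- Condition (M): `λ̲ < ∞` (i.e. `ρ̂` is somewhere finite) and
`lim_{λ↓λ̲} ρ̂(λ) > 1`; since `ρ̂` is nonincreasing, the right limit at `λ̲`
equals the supremum over `λ > λ̲`. -/
def CondM (w : ℕ → ℝ) : Prop :=
  {lam : ℝ | 0 < lam ∧ lapRho w lam ≠ ∞}.Nonempty ∧
    1 < ⨆ lam ∈ Set.Ioi (lowerLam w), lapRho w lam

/-- the set `HIST(G)` of historical orderings of `G` -/
def Hist (G : Finset Vertex) : Set (List Vertex) :=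
  {s : List Vertex | s.Nodup ∧ s.toFinset = G ∧
    ∀ i < s.length, IsROTree (s.take (i + 1)).toFinset}

/-- `W(G,s,i)`, the total weight of `G(s,i) = {s₀,…,s_i}` -/
noncomputable def histW (w : ℕ → ℝ) (s : List Vertex) (i : ℕ) : ℝ :=
  totalWeight w (s.take (i + 1)).toFinset

/-- `w(G,s,i) = w(deg(parent of s_i, G(s,i−1)))`, for `1 ≤ i ≤ |G|−1` -/
noncomputable def histw (w : ℕ → ℝ) (s : List Vertex) (i : ℕ) : ℝ :=
  w (degree (s.getD i []).dropLast (s.take i).toFinset)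

/-- the asymptotic degree distribution `p_w(k)` (with Malthusian parameter `lam`) -/
noncomputable def pW (w : ℕ → ℝ) (lam : ℝ) (k : ℕ) : ℝ :=
  lam / (lam + w k) * ∏ i ∈ Finset.range k, w i / (lam + w i)

/-- the asymptotic subtree distribution `π_w(G)` (with Malthusian parameter `lam`) -/
noncomputable def piW (w : ℕ → ℝ) (lam : ℝ) (G : Finset Vertex) : ℝ :=
  ∑ᶠ s ∈ Hist G,
    lam / (lam + totalWeight w G) *
      ∏ i ∈ Finset.range (G.card - 1), histw w s (i + 1) / (lam + histW w s i)

/-!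
Expanding the square, `E[ξ̂(λ)²] = Σ_{j,k} E[e^{-λ(σ_j+σ_k)}]`, and for `j ≤ k` independence gives
`E[e^{-λ(σ_j+σ_k)}] = Π_{i<j} w(i)/(2λ+w(i)) · Π_{j≤i<k} w(i)/(λ+w(i))`.
Choose `l ∈ (λ̲, λ*)` with `ρ̂(l) < ∞`. As `w(i) → ∞`, eventually
`w(i)/(2λ*+w(i)) ≤ (w(i)/(l+w(i)))²`, so the cross moment at `λ*` is at most
`C Π_{i<j} w(i)/(l+w(i)) · Π_{i<k} w(i)/(l+w(i))` and the double sum is at most `C ρ̂(l)² < ∞`.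
Condition (L) follows from `x log⁺ x ≤ x²`.
-/

open MeasureTheory ProbabilityTheory Filter Set Real

@[to_additive]
lemma Finset.prod_range_ite_lt {M : Type*} [CommMonoid M] (f g : ℕ → M) {m n : ℕ} (hmn : m ≤ n) :
    ∏ i ∈ Finset.range n, (if i < m then f i else g i) =
      (∏ i ∈ Finset.range m, f i) * ∏ i ∈ Finset.Ico m n, g i := by
  rw [← Finset.prod_range_mul_prod_Ico _ hmn]
  congr 1 <;> refine Finset.prod_congr rfl fun i hi ↦ ?_
  · exact if_pos (Finset.mem_range.mp hi)
  · exact if_neg (Finset.mem_Ico.mp hi).1.not_gt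

lemma ENNReal.ofReal_exp_neg_sum {ι : Type*} (s : Finset ι) (f : ι → ℝ) :
    ENNReal.ofReal (exp (-∑ i ∈ s, f i)) = ∏ i ∈ s, ENNReal.ofReal (exp (-f i)) := by
  rw [← Finset.sum_neg_distrib, exp_sum, ENNReal.ofReal_prod_of_nonneg fun i _ ↦ exp_nonneg _]

lemma ENNReal.ofReal_tsum_le {ι : Type*} {f : ι → ℝ} (hf : ∀ i, 0 ≤ f i) :
    ENNReal.ofReal (∑' i, f i) ≤ ∑' i, ENNReal.ofReal (f i) := by
  by_cases hs : Summable f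
  · exact (ENNReal.ofReal_tsum_of_nonneg hf hs).le
  · simp [tsum_eq_zero_of_not_summable hs]

lemma ENNReal.tsum_sq {ι : Type*} (f : ι → ℝ≥0∞) :
    (∑' i, f i) ^ 2 = ∑' i, ∑' j, f i * f j := by
  rw [sq, ← ENNReal.tsum_mul_right]
  exact tsum_congr fun i ↦ ENNReal.tsum_mul_left.symm

lemma ENNReal.exists_prod_range_le_mul_prod_range {f g : ℕ → ℝ≥0∞} (hf : ∀ i, f i ≠ ∞)
    (hg₀ : ∀ i, g i ≠ 0) (hg : ∀ i, g i ≠ ∞) (hfg : ∀ᶠ i in atTop, f i ≤ g i) :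
    ∃ C ≠ ∞, ∀ n, ∏ i ∈ Finset.range n, f i ≤ C * ∏ i ∈ Finset.range n, g i := by
  obtain ⟨N, hN⟩ := eventually_atTop.mp hfg
  set D : ℕ → ℝ≥0∞ := fun i ↦ max (f i / g i) 1
  have hfD : ∀ i, f i ≤ D i * g i := fun i ↦
    (ENNReal.div_mul_cancel (hg₀ i) (hg i)).symm.le.trans (mul_le_mul_left (le_max_left _ _) _)
  have hD₁ : ∀ i ≥ N, D i = 1 := fun i hi ↦
    max_eq_right ((ENNReal.div_le_iff (hg₀ i) (hg i)).mpr (by simpa using hN i hi))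
  refine ⟨∏ i ∈ Finset.range N, D i,
    ENNReal.prod_ne_top fun i _ ↦ max_ne_top (ENNReal.div_ne_top (hf i) (hg₀ i)) ENNReal.one_ne_top,
    fun n ↦ ?_⟩
  have hDn : ∏ i ∈ Finset.range n, D i ≤ ∏ i ∈ Finset.range N, D i :=
    calc ∏ i ∈ Finset.range n, D i ≤ ∏ i ∈ Finset.range (max n N), D i :=
          Finset.prod_le_prod_of_subset_of_one_le'
            (Finset.range_subset_range.mpr (le_max_left _ _)) fun i _ _ ↦ le_max_right _ _
      _ = ∏ i ∈ Finset.range N, D i := by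
          rw [← Finset.prod_range_mul_prod_Ico _ (le_max_right n N),
            Finset.prod_eq_one fun i hi ↦ hD₁ i (Finset.mem_Ico.mp hi).1, mul_one]
  calc ∏ i ∈ Finset.range n, f i ≤ ∏ i ∈ Finset.range n, D i * g i :=
        Finset.prod_le_prod' fun i _ ↦ hfD i
    _ ≤ (∏ i ∈ Finset.range N, D i) * ∏ i ∈ Finset.range n, g i := by
        rw [Finset.prod_mul_distrib]
        exact mul_le_mul_left hDn _

lemma mul_max_log_zero_le_sq {x : ℝ} (hx : 0 ≤ x) : x * max (log x) 0 ≤ x ^ 2 := by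
  rw [sq]
  exact mul_le_mul_of_nonneg_left (max_le (log_le_self hx) hx) hx

lemma lintegral_exp_neg_mul_expMeasure {r c : ℝ} (hr : 0 < r) (hc : 0 ≤ c) :
    ∫⁻ x, ENNReal.ofReal (exp (-(c * x))) ∂expMeasure r = ENNReal.ofReal (r / (c + r)) := by
  have hdens : ∀ x, exponentialPDF r x * ENNReal.ofReal (exp (-(c * x))) =
      (Ici 0).indicator (fun x ↦ ENNReal.ofReal (r * exp (-(c + r) * x))) x := by
    intro x
    rcases lt_or_ge x 0 with hx | hx
    · simp [exponentialPDF_of_neg hx, hx]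
    · rw [exponentialPDF_of_nonneg hx, indicator_of_mem (mem_Ici.mpr hx),
        ← ENNReal.ofReal_mul (by positivity), mul_assoc, ← exp_add]
      ring_nf
  have hexp : expMeasure r = volume.withDensity (exponentialPDF r) := rfl
  rw [hexp, lintegral_withDensity_eq_lintegral_mul _
      (show Measurable (exponentialPDF r) from (measurable_exponentialPDFReal r).ennreal_ofReal)
      (by fun_prop)]
  simp only [Pi.mul_apply]
  rw [lintegral_congr hdens, lintegral_indicator measurableSet_Ici,
    ← ofReal_integral_eq_lintegral_ofReal, integral_Ici_eq_integral_Ioi, integral_const_mul,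
    integral_exp_mul_Ioi (by linarith)]
  · field_simp; simp
  · exact ((integrableOn_Ici_iff_integrableOn_Ioi).mpr
      (integrableOn_exp_mul_Ioi (by linarith) 0)).const_mul r
  · exact Eventually.of_forall fun x ↦ by positivity

section ExponentialTail

variable {Ω : Type*} [MeasurableSpace Ω] {P : Measure Ω} [IsProbabilityMeasure P]
  {Y : Ω → ℝ} {r : ℝ}

lemma map_eq_expMeasure_of_tail (hY : Measurable Y) (hr : 0 < r)
    (htail : ∀ t, 0 ≤ t → P {ω | t < Y ω} = ENNReal.ofReal (exp (-(r * t)))) :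
    P.map Y = expMeasure r := by
  have : IsProbabilityMeasure (expMeasure r) := isProbabilityMeasure_expMeasure hr
  have : IsProbabilityMeasure (P.map Y) := Measure.isProbabilityMeasure_map hY.aemeasurable
  refine Measure.eq_of_cdf _ _ ?_
  ext x
  refine (ENNReal.ofReal_eq_ofReal_iff (cdf_nonneg _ _) (cdf_nonneg _ _)).mp ?_
  have hIic : P.map Y (Iic x) = 1 - P {ω | x < Y ω} := by
    rw [Measure.map_apply hY measurableSet_Iic, ← compl_Ioi, preimage_compl,
      prob_compl_eq_one_sub (hY measurableSet_Ioi)]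
    rfl
  rw [ofReal_cdf, hIic, cdf_expMeasure_eq hr]
  split_ifs with hx
  · rw [htail x hx, ENNReal.ofReal_sub _ (exp_nonneg _), ENNReal.ofReal_one]
  · have hpos : P {ω | 0 < Y ω} = 1 := by simpa using htail 0 le_rfl
    have : P {ω | x < Y ω} = 1 :=
      le_antisymm prob_le_one (hpos ▸ measure_mono fun ω hω ↦ (not_le.mp hx).trans hω)
    simp [this]

lemma lintegral_exp_neg_mul_of_tail (hY : Measurable Y) (hr : 0 < r)
    (htail : ∀ t, 0 ≤ t → P {ω | t < Y ω} = ENNReal.ofReal (exp (-(r * t)))) {c : ℝ}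
    (hc : 0 ≤ c) :
    ∫⁻ ω, ENNReal.ofReal (exp (-(c * Y ω))) ∂P = ENNReal.ofReal (r / (c + r)) := by
  rw [← lintegral_exp_neg_mul_expMeasure hr hc, ← map_eq_expMeasure_of_tail hY hr htail,
    lintegral_map (by fun_prop) hY]

end ExponentialTail

-- The Laplace transform at `c` of the exponential law of rate `w i`.
noncomputable def expLaplace {ι : Type*} (w : ι → ℝ) (c : ℝ) (i : ι) : ℝ≥0∞ :=
  ENNReal.ofReal (w i / (c + w i))

section IndependentExponentials

variable {Ω ι : Type*} [MeasurableSpace Ω] {P : Measure Ω} [IsProbabilityMeasure P]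
  {X : ι → Ω → ℝ} {w : ι → ℝ}

lemma lintegral_prod_exp_neg_mul (hX : ∀ i, Measurable (X i)) (hindep : iIndepFun X P)
    (hw : ∀ i, 0 < w i)
    (htail : ∀ i t, 0 ≤ t → P {ω | t < X i ω} = ENNReal.ofReal (exp (-(w i * t))))
    (s : Finset ι) {c : ι → ℝ} (hc : ∀ i, 0 ≤ c i) :
    ∫⁻ ω, ∏ i ∈ s, ENNReal.ofReal (exp (-(c i * X i ω))) ∂P = ∏ i ∈ s, expLaplace w (c i) i := by
  refine (lintegral_prod_eq_prod_lintegral_of_indepFun s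
    (fun i ω ↦ ENNReal.ofReal (exp (-(c i * X i ω))))
    (hindep.comp (fun i x ↦ ENNReal.ofReal (exp (-(c i * x)))) fun i ↦ by fun_prop)
    fun i ↦ by fun_prop).trans ?_
  exact Finset.prod_congr rfl fun i _ ↦
    lintegral_exp_neg_mul_of_tail (hX i) (hw i) (htail i) (hc i)

end IndependentExponentials

section PartialSums

variable {Ω : Type*} [MeasurableSpace Ω] {P : Measure Ω} [IsProbabilityMeasure P]
  {X : ℕ → Ω → ℝ} {w : ℕ → ℝ}

lemma lintegral_exp_neg_mul_sum_mul_exp_neg_mul_sum (hX : ∀ i, Measurable (X i))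
    (hindep : iIndepFun X P) (hw : ∀ i, 0 < w i)
    (htail : ∀ i t, 0 ≤ t → P {ω | t < X i ω} = ENNReal.ofReal (exp (-(w i * t))))
    {lam : ℝ} (hlam : 0 ≤ lam) {m n : ℕ} (hmn : m ≤ n) :
    ∫⁻ ω, ENNReal.ofReal (exp (-(lam * ∑ i ∈ Finset.range m, X i ω))) *
        ENNReal.ofReal (exp (-(lam * ∑ i ∈ Finset.range n, X i ω))) ∂P =
      (∏ i ∈ Finset.range m, expLaplace w (2 * lam) i) *
        ∏ i ∈ Finset.Ico m n, expLaplace w lam i := by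
  set c : ℕ → ℝ := fun i ↦ if i < m then 2 * lam else lam with hc
  have hpt : ∀ ω, ENNReal.ofReal (exp (-(lam * ∑ i ∈ Finset.range m, X i ω))) *
      ENNReal.ofReal (exp (-(lam * ∑ i ∈ Finset.range n, X i ω))) =
      ∏ i ∈ Finset.range n, ENNReal.ofReal (exp (-(c i * X i ω))) := by
    intro ω
    rw [← ENNReal.ofReal_mul (exp_nonneg _), ← exp_add, ← ENNReal.ofReal_exp_neg_sum]
    simp only [hc, ite_mul, Finset.sum_range_ite_lt _ _ hmn, ← Finset.mul_sum,
      ← Finset.sum_range_add_sum_Ico _ hmn]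
    congr 2
    ring
  have hc0 : ∀ i, 0 ≤ c i := fun i ↦ by positivity
  rw [lintegral_congr hpt, lintegral_prod_exp_neg_mul hX hindep hw htail _ hc0,
    ← Finset.prod_range_ite_lt _ _ hmn]
  exact Finset.prod_congr rfl fun i _ ↦ apply_ite (expLaplace w · i) _ _ _

end PartialSums

section Weights

variable {w : ℕ → ℝ}

lemma lapRho_eq_tsum_prod_expLaplace (lam : ℝ) :
    lapRho w lam = ∑' k, ∏ i ∈ Finset.range (k + 1), expLaplace w lam i := rfl

lemma expLaplace_le_expLaplace {i : ℕ} (hw : 0 ≤ w i) {c c' : ℝ} (hc : 0 < c) (hcc' : c ≤ c') :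
    expLaplace w c' i ≤ expLaplace w c i :=
  ENNReal.ofReal_le_ofReal (div_le_div_of_nonneg_left hw (by linarith) (by linarith))

lemma eventually_expLaplace_two_mul_le_sq (hw : Tendsto w atTop atTop) {l L : ℝ} (hl : 0 ≤ l)
    (hlL : l < L) : ∀ᶠ i in atTop, expLaplace w (2 * L) i ≤ expLaplace w l i ^ 2 := by
  filter_upwards [hw.eventually_ge_atTop (l ^ 2 / (2 * (L - l))), hw.eventually_gt_atTop 0]
    with i hbig hpos
  rw [div_le_iff₀ (by linarith)] at hbig
  rw [expLaplace, expLaplace, ← ENNReal.ofReal_pow (div_nonneg hpos.le (by linarith)), div_pow]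
  refine ENNReal.ofReal_le_ofReal ((div_le_div_iff₀ (by linarith) (by positivity)).mpr ?_)
  nlinarith [mul_le_mul_of_nonneg_left hbig hpos.le]

lemma exists_lapRho_ne_top_of_lowerLam_lt (hne : {lam | 0 < lam ∧ lapRho w lam ≠ ∞}.Nonempty)
    {L : ℝ} (hL : lowerLam w < L) : ∃ l, 0 < l ∧ l < L ∧ lapRho w l ≠ ∞ := by
  obtain ⟨l, ⟨hl, hfin⟩, hlL⟩ := (csInf_lt_iff ⟨0, fun x hx ↦ hx.1.le⟩ hne).mp hL
  exact ⟨l, hl, hlL, hfin⟩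

end Weights

section SecondMoment

variable {Ω : Type*} [MeasurableSpace Ω] {P : Measure Ω} [IsProbabilityMeasure P]
  {X : ℕ → Ω → ℝ} {w : ℕ → ℝ}

lemma exists_lintegral_exp_neg_mul_sum_mul_le (hX : ∀ i, Measurable (X i))
    (hindep : iIndepFun X P) (hw : ∀ i, 0 < w i)
    (htail : ∀ i t, 0 ≤ t → P {ω | t < X i ω} = ENNReal.ofReal (exp (-(w i * t))))
    (hwt : Tendsto w atTop atTop) {l lam : ℝ} (hl : 0 < l) (hlam : l < lam) :
    ∃ C ≠ ∞, ∀ m n, ∫⁻ ω, ENNReal.ofReal (exp (-(lam * ∑ i ∈ Finset.range m, X i ω))) *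
        ENNReal.ofReal (exp (-(lam * ∑ i ∈ Finset.range n, X i ω))) ∂P ≤
      C * (∏ i ∈ Finset.range m, expLaplace w l i) * ∏ i ∈ Finset.range n, expLaplace w l i := by
  obtain ⟨C, hC, hprod⟩ := ENNReal.exists_prod_range_le_mul_prod_range
    (f := expLaplace w (2 * lam)) (g := fun i ↦ expLaplace w l i ^ 2)
    (fun i ↦ ENNReal.ofReal_ne_top)
    (fun i ↦ pow_ne_zero _ (ENNReal.ofReal_pos.mpr (div_pos (hw i) (by linarith [hw i]))).ne')
    (fun i ↦ ENNReal.pow_ne_top ENNReal.ofReal_ne_top)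
    (eventually_expLaplace_two_mul_le_sq hwt hl.le hlam)
  have hle : ∀ m n, m ≤ n → ∫⁻ ω, ENNReal.ofReal (exp (-(lam * ∑ i ∈ Finset.range m, X i ω))) *
        ENNReal.ofReal (exp (-(lam * ∑ i ∈ Finset.range n, X i ω))) ∂P ≤
      C * (∏ i ∈ Finset.range m, expLaplace w l i) * ∏ i ∈ Finset.range n, expLaplace w l i := by
    intro m n hmn
    rw [lintegral_exp_neg_mul_sum_mul_exp_neg_mul_sum hX hindep hw htail (by linarith) hmn]
    calc _ ≤ (C * ∏ i ∈ Finset.range m, expLaplace w l i ^ 2) *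
          ∏ i ∈ Finset.Ico m n, expLaplace w l i :=
          mul_le_mul' (hprod m) (Finset.prod_le_prod' fun i _ ↦
            expLaplace_le_expLaplace (hw i).le hl hlam.le)
      _ = _ := by
          rw [Finset.prod_pow, ← Finset.prod_range_mul_prod_Ico _ hmn]
          ring
  refine ⟨C, hC, fun m n ↦ ?_⟩
  rcases le_total m n with hmn | hnm
  · exact hle m n hmn
  · convert hle n m hnm using 1
    · exact lintegral_congr fun ω ↦ mul_comm _ _
    · ring

lemma lintegral_sq_tsum_exp_neg_mul_sum_lt_top (hX : ∀ i, Measurable (X i))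
    (hindep : iIndepFun X P) (hw : ∀ i, 0 < w i)
    (htail : ∀ i t, 0 ≤ t → P {ω | t < X i ω} = ENNReal.ofReal (exp (-(w i * t))))
    (hwt : Tendsto w atTop atTop) {l lam : ℝ} (hl : 0 < l) (hlam : l < lam)
    (hfin : lapRho w l ≠ ∞) :
    ∫⁻ ω, ENNReal.ofReal ((∑' k : ℕ, exp (-(lam * ∑ i ∈ Finset.range (k + 1), X i ω))) ^ 2) ∂P
      < ∞ := by
  obtain ⟨C, hC, hcross⟩ :=
    exists_lintegral_exp_neg_mul_sum_mul_le hX hindep hw htail hwt hl hlam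
  set G : ℕ → Ω → ℝ≥0∞ :=
    fun k ω ↦ ENNReal.ofReal (exp (-(lam * ∑ i ∈ Finset.range (k + 1), X i ω)))
  have hGm : ∀ k, Measurable (G k) := fun k ↦ by fun_prop
  calc _ ≤ ∫⁻ ω, (∑' k, G k ω) ^ 2 ∂P := lintegral_mono fun ω ↦ by
        rw [ENNReal.ofReal_pow (tsum_nonneg fun k ↦ (exp_pos _).le)]
        gcongr
        exact ENNReal.ofReal_tsum_le fun k ↦ (exp_pos _).le
    _ = ∑' j, ∑' k, ∫⁻ ω, G j ω * G k ω ∂P := by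
        simp_rw [ENNReal.tsum_sq]
        refine (lintegral_tsum fun j ↦
          (Measurable.tsum fun k ↦ (hGm j).mul (hGm k)).aemeasurable).trans ?_
        exact tsum_congr fun j ↦ lintegral_tsum fun k ↦ ((hGm j).mul (hGm k)).aemeasurable
    _ ≤ ∑' j, ∑' k, C * (∏ i ∈ Finset.range (j + 1), expLaplace w l i) *
          ∏ i ∈ Finset.range (k + 1), expLaplace w l i :=
        ENNReal.tsum_le_tsum fun j ↦ ENNReal.tsum_le_tsum fun k ↦ hcross (j + 1) (k + 1)
    _ = C * lapRho w l ^ 2 := by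
        simp_rw [lapRho_eq_tsum_prod_expLaplace, ENNReal.tsum_sq, ← ENNReal.tsum_mul_left,
          mul_assoc]
    _ < ∞ := ENNReal.mul_lt_top hC.lt_top (ENNReal.pow_lt_top hfin.lt_top)

end SecondMoment

open MeasureTheory ProbabilityTheory Filter in
theorem condition_L_general (w : ℕ → ℝ) (hw : ∀ n, 0 < w n)
    (lamStar : ℝ) (hroot : lowerLam w < lamStar ∧ lapRho w lamStar = 1)
    (hInf : Tendsto w atTop atTop)
    (Ω : Type) [MeasurableSpace Ω] (P : Measure Ω) [IsProbabilityMeasure P]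
    (X : ℕ → Ω → ℝ) (hmeas : ∀ i, Measurable (X i))
    (hindep : iIndepFun X P)
    (hexp : ∀ (i : ℕ) (t : ℝ), 0 ≤ t →
      P {ω | t < X i ω} = ENNReal.ofReal (Real.exp (-(w i * t)))) :
    (∫⁻ ω, ENNReal.ofReal
        ((∑' k : ℕ,
          Real.exp (-(lamStar * ∑ i ∈ Finset.range (k + 1), X i ω))) ^ 2) ∂P) < ∞ ∧
    (∫⁻ ω, ENNReal.ofReal
        ((∑' k : ℕ, Real.exp (-(lamStar * ∑ i ∈ Finset.range (k + 1), X i ω))) *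
          max (Real.log
            (∑' k : ℕ, Real.exp (-(lamStar * ∑ i ∈ Finset.range (k + 1), X i ω)))) 0) ∂P)
      < ∞ := by
  obtain ⟨hlow, hone⟩ := hroot
  have hpos : 0 < lamStar := (Real.sInf_nonneg fun _ hx ↦ hx.1.le).trans_lt hlow
  obtain ⟨l, hl, hlL, hfin⟩ :=
    exists_lapRho_ne_top_of_lowerLam_lt ⟨lamStar, hpos, by simp [hone]⟩ hlow
  have hsq := lintegral_sq_tsum_exp_neg_mul_sum_lt_top hmeas hindep hw hexp hInf hl hlL hfin
  refine ⟨hsq, (lintegral_mono fun ω ↦ ENNReal.ofReal_le_ofReal ?_).trans_lt hsq⟩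
  exact mul_max_log_zero_le_sq (tsum_nonneg fun _ ↦ (Real.exp_pos _).le)

open MeasureTheory ProbabilityTheory Filter in
/-- **Lemma (Section 7).**  If `w` satisfies condition (M) and `w(n) → ∞`,
then `E[ξ̂(λ*)²] < ∞`, where `ξ̂(λ*) = Σ_{k≥1} e^{−λ* σ_k}` and
`σ_k = X_0 + ⋯ + X_{k−1}` is a sum of independent exponentials of rates
`w(0),…,w(k−1)`; in particular condition (L), `E[ξ̂(λ*) log⁺ ξ̂(λ*)] < ∞`,
holds. -/
theorem condition_L (w : ℕ → ℝ) (hw : ∀ n, 0 < w n) (hM : CondM w)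
    (lamStar : ℝ) (hroot : lowerLam w < lamStar ∧ lapRho w lamStar = 1)
    (hInf : Tendsto w atTop atTop)
    (Ω : Type) [MeasurableSpace Ω] (P : Measure Ω) [IsProbabilityMeasure P]
    (X : ℕ → Ω → ℝ) (hmeas : ∀ i, Measurable (X i))
    (hindep : iIndepFun X P)
    (hexp : ∀ (i : ℕ) (t : ℝ), 0 ≤ t →
      P {ω | t < X i ω} = ENNReal.ofReal (Real.exp (-(w i * t)))) :
    (∫⁻ ω, ENNReal.ofReal
        ((∑' k : ℕ,
          Real.exp (-(lamStar * ∑ i ∈ Finset.range (k + 1), X i ω))) ^ 2) ∂P) < ∞ ∧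
    (∫⁻ ω, ENNReal.ofReal
        ((∑' k : ℕ, Real.exp (-(lamStar * ∑ i ∈ Finset.range (k + 1), X i ω))) *
          max (Real.log
            (∑' k : ℕ, Real.exp (-(lamStar * ∑ i ∈ Finset.range (k + 1), X i ω)))) 0) ∂P)
      < ∞ :=
  condition_L_general w hw lamStar hroot hInf Ω P X hmeas hindep hexp
end

section
/- Let w : ℕ → (0,∞) be a weight function such that ρ̂(λ) = Σ_{k=1}^∞ Π_{i=0}^{k−1} w(i)/(λ+w(i)) is finite for some λ > 0 (in particular, this holds under condition (M)). Then Σ_{k=0}^∞ 1/w(k) = ∞. -/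
open scoped Classical BigOperators ENNReal

/-! If `Σ 1/w(k) = S < ∞`, then `Π_{i<k} (λ + w(i))/w(i) = Π_{i<k} (1 + λ/w(i)) ≤ exp(λS)`, so every
term of the series `ρ̂(λ)` is at least `exp(-λS) > 0` and the series diverges. -/

theorem Real.prod_one_add_le_exp_tsum {ι : Type*} {f : ι → ℝ} (hf : ∀ i, 0 ≤ f i)
    (hfs : Summable f) (s : Finset ι) : ∏ i ∈ s, (1 + f i) ≤ Real.exp (∑' i, f i) :=
  (Real.prod_one_add_le_exp_sum s hf).trans
    (Real.exp_le_exp.mpr (hfs.sum_le_tsum s fun i _ => hf i))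

theorem Real.exp_neg_mul_tsum_inv_le_prod_div {ι : Type*} {w : ι → ℝ} (hw : ∀ i, 0 < w i)
    (hS : Summable fun i => (w i)⁻¹) {lam : ℝ} (hlam : 0 ≤ lam) (s : Finset ι) :
    Real.exp (-(lam * ∑' i, (w i)⁻¹)) ≤ ∏ i ∈ s, w i / (lam + w i) := by
  have hterm : ∀ i, w i / (lam + w i) = (1 + lam * (w i)⁻¹)⁻¹ := fun i => by
    field_simp [(hw i).ne']
    ring
  have hnonneg : ∀ i, 0 ≤ lam * (w i)⁻¹ := fun i => mul_nonneg hlam (inv_pos.mpr (hw i)).le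
  have hbound := Real.prod_one_add_le_exp_tsum hnonneg (hS.mul_left lam) s
  rw [tsum_mul_left] at hbound
  rw [Finset.prod_congr rfl fun i _ => hterm i, Finset.prod_inv_distrib, Real.exp_neg]
  exact inv_anti₀ (Finset.prod_pos fun i _ => by linarith [hnonneg i]) hbound

theorem ENNReal.tsum_eq_top_of_forall_le {ι : Type*} [Infinite ι] {f : ι → ℝ≥0∞} {c : ℝ≥0∞}
    (hc : c ≠ 0) (hf : ∀ i, c ≤ f i) : ∑' i, f i = ∞ :=
  top_unique <| (ENNReal.tsum_const_eq_top_of_ne_zero hc).symm.le.trans (ENNReal.tsum_le_tsum hf)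

theorem lapRho_eq_top_of_summable_inv {w : ℕ → ℝ} (hw : ∀ n, 0 < w n)
    (hS : Summable fun k => (w k)⁻¹) {lam : ℝ} (hlam : 0 ≤ lam) : lapRho w lam = ∞ := by
  refine ENNReal.tsum_eq_top_of_forall_le
    (ENNReal.ofReal_pos.mpr (Real.exp_pos (-(lam * ∑' k, (w k)⁻¹)))).ne' fun k => ?_
  rw [← ENNReal.ofReal_prod_of_nonneg fun i _ => (div_pos (hw i) (by linarith [hw i])).le]
  exact ENNReal.ofReal_le_ofReal (Real.exp_neg_mul_tsum_inv_le_prod_div hw hS hlam _)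

/-- If `ρ̂(λ) < ∞` for some `λ > 0` (in particular under condition (M)), then
`Σ_k 1/w(k) = ∞`. -/
theorem no_explosion (w : ℕ → ℝ) (hw : ∀ n, 0 < w n)
    (hfin : ∃ lam : ℝ, 0 < lam ∧ lapRho w lam ≠ ∞) :
    ¬ Summable (fun k : ℕ => (w k)⁻¹) := by
  intro hS
  obtain ⟨lam, hlam, hfinite⟩ := hfin
  exact hfinite (lapRho_eq_top_of_summable_inv hw hS hlam.le)
end

section
/- Let w : ℕ → (0,∞) be any weight function, let G ∈ 𝒢 with |G| = n+1, and let s ∈ HIST(G) be any historical ordering of G. Then Π_{i=0}^{n−1} w(G,s,i+1) = Π_{x∈G} Π_{j=0}^{deg(x,G)−1} w(j). -/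
open scoped Classical BigOperators ENNReal

/-
Adding the vertices of `G` one at a time along a historical ordering, each new vertex `y`
is a leaf whose parent `p` has exactly `deg(p, G(s, i-1))` children beforehand, so the
step multiplies `∏_{x} ∏_{j < deg x} w(j)` by the single factor `w(deg(p, G(s, i-1)))`,
which is `w(G, s, i)`. Starting from the one-vertex tree, where that product is `1`, both
sides are therefore built up by the same factors.
-/

noncomputable def degreeProd (w : ℕ → ℝ) (G : Finset Vertex) : ℝ :=
  ∏ x ∈ G, ∏ j ∈ Finset.range (degree x G), w j

lemma List.dropLast_ne_self {α : Type*} {l : List α} (hl : l ≠ []) : l.dropLast ≠ l :=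
  ne_of_apply_ne List.length (by
    rw [List.length_dropLast]
    have := List.length_pos_iff.mpr hl
    omega)

lemma IsROTree.dropLast_mem {G : Finset Vertex} (hG : IsROTree G) {y : Vertex} (hy : y ∈ G)
    (hne : y ≠ []) : y.dropLast ∈ G :=
  (hG.2 y hy hne).2.1

lemma degree_insert {T : Finset Vertex} {y : Vertex} (hy : y ∉ T) (hne : y ≠ [])
    (x : Vertex) :
    degree x (insert y T) = if y.dropLast = x then degree x T + 1 else degree x T := by
  unfold degree
  rw [Finset.filter_insert]
  split_ifs with h₁ h₂ h₂
  · exact Finset.card_insert_of_notMem fun hc => hy (Finset.mem_of_mem_filter _ hc)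
  · exact absurd h₁.2 h₂
  · exact absurd ⟨hne, h₂⟩ h₁
  · rfl

lemma degree_insert_self_eq_zero {T : Finset Vertex} (hT : IsROTree T) {y : Vertex}
    (hy : y ∉ T) : degree y (insert y T) = 0 := by
  rw [degree, Finset.card_eq_zero, Finset.filter_eq_empty_iff]
  rintro z hz ⟨hz₀, rfl⟩
  rcases Finset.mem_insert.mp hz with hzy | hzT
  · exact List.dropLast_ne_self hz₀ hzy.symm
  · exact hy (hT.dropLast_mem hzT hz₀)

lemma degreeProd_singleton_nil (w : ℕ → ℝ) : degreeProd w {[]} = 1 := by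
  simp [degreeProd, degree, Finset.filter_singleton]

lemma degreeProd_insert (w : ℕ → ℝ) {T : Finset Vertex} (hT : IsROTree T) {y : Vertex}
    (hy : y ∉ T) (hT' : IsROTree (insert y T)) :
    degreeProd w (insert y T) = w (degree y.dropLast T) * degreeProd w T := by
  have hne : y ≠ [] := fun h => hy (h ▸ hT.1)
  have hp : y.dropLast ∈ T :=
    (Finset.mem_insert.mp (hT'.dropLast_mem (Finset.mem_insert_self y T) hne)).resolve_left
      (List.dropLast_ne_self hne)
  have hfactor : ∀ x ∈ T, ∏ j ∈ Finset.range (degree x (insert y T)), w j =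
      (∏ j ∈ Finset.range (degree x T), w j) * if y.dropLast = x then w (degree x T) else 1 := by
    intro x _
    rw [degree_insert hy hne x]
    split_ifs
    · rw [Finset.prod_range_succ]
    · rw [mul_one]
  rw [degreeProd, Finset.prod_insert hy, degree_insert_self_eq_zero hT hy, Finset.range_zero,
    Finset.prod_empty, one_mul, Finset.prod_congr rfl hfactor, Finset.prod_mul_distrib,
    Finset.prod_ite_eq, if_pos hp, mul_comm, degreeProd]

lemma List.toFinset_take_add_one {α : Type*} [DecidableEq α] {l : List α} {i : ℕ}
    (h : i < l.length) : (l.take (i + 1)).toFinset = insert l[i] (l.take i).toFinset := by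
  rw [List.take_succ_eq_append_getElem h, List.toFinset_append, List.toFinset_cons,
    List.toFinset_nil, Finset.union_insert, Finset.union_empty]

lemma List.Nodup.getElem_notMem_take {α : Type*} {l : List α} (hl : l.Nodup) {i : ℕ}
    (h : i < l.length) : l[i] ∉ l.take i := by
  have hnd := (List.take_sublist (i + 1) l).nodup hl
  rw [List.take_succ_eq_append_getElem h] at hnd
  exact fun hmem => List.disjoint_of_nodup_append hnd hmem (List.mem_singleton_self _)

lemma histw_eq_of_lt (w : ℕ → ℝ) {s : List Vertex} {i : ℕ} (h : i < s.length) :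
    histw w s i = w (degree s[i].dropLast (s.take i).toFinset) := by
  simp [histw, List.getD, List.getElem?_eq_getElem h]

lemma prod_histw_eq_degreeProd_take (w : ℕ → ℝ) {s : List Vertex} (hnd : s.Nodup)
    (htree : ∀ i < s.length, IsROTree (s.take (i + 1)).toFinset) :
    ∀ m < s.length,
      ∏ i ∈ Finset.range m, histw w s (i + 1) = degreeProd w (s.take (m + 1)).toFinset := by
  intro m
  induction m with
  | zero =>
    intro h
    have hroot : s[0] = [] := by
      simpa [List.toFinset_take_add_one h] using (htree 0 h).1
    rw [List.toFinset_take_add_one h, hroot]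
    simp [degreeProd_singleton_nil]
  | succ m ih =>
    intro h
    rw [Finset.prod_range_succ, ih (by omega), List.toFinset_take_add_one h,
      degreeProd_insert w (htree m (by omega)) (by simpa using hnd.getElem_notMem_take h)
        (List.toFinset_take_add_one h ▸ htree (m + 1) h),
      histw_eq_of_lt w h, mul_comm]

theorem hist_weight_product_general (w : ℕ → ℝ) (G : Finset Vertex)
    (n : ℕ) (hcard : G.card = n + 1) (s : List Vertex) (hs : s ∈ Hist G) :
    ∏ i ∈ Finset.range n, histw w s (i + 1) =
      ∏ x ∈ G, ∏ j ∈ Finset.range (degree x G), w j := by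
  obtain ⟨hnd, hG, htree⟩ := hs
  have hlen : s.length = n + 1 := by
    rw [← List.toFinset_card_of_nodup hnd, hG, hcard]
  have h := prod_histw_eq_degreeProd_take w hnd htree n (by omega)
  rwa [List.take_of_length_le hlen.le, hG] at h

/-- For any weight function `w`, any tree `G` with `|G| = n+1` and any
historical ordering `s ∈ HIST(G)`,
`Π_{i=0}^{n−1} w(G,s,i+1) = Π_{x∈G} Π_{j=0}^{deg(x,G)−1} w(j)`. -/
theorem hist_weight_product (w : ℕ → ℝ) (G : Finset Vertex) (hG : IsROTree G)
    (n : ℕ) (hcard : G.card = n + 1) (s : List Vertex) (hs : s ∈ Hist G) :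
    ∏ i ∈ Finset.range n, histw w s (i + 1) =
      ∏ x ∈ G, ∏ j ∈ Finset.range (degree x G), w j :=
  hist_weight_product_general w G n hcard s hs
end

section
/- Let G ∈ 𝒢 with |G| > 1. For a non-root vertex x = (x₁,…,x_n) ∈ G, let B(x) = {y ∈ G : y = (x₁,…,x_{n−1},k) for some k > x_n} be the set of later siblings of x, and set a(x) = max(|G↓x| − 1, 1) and b(x) = max(Σ_{y∈B(x)} |G↓y|, 1). Then the number of historical orderings of G is |HIST(G)| = (|G|−2)! · Π_{x∈G, x≠∅} a(x)^{−1} b(x)^{−1}. -/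
open scoped Classical BigOperators ENNReal

/-- the set `B(x)` of later siblings of `x` in `G` -/
def laterSiblings (G : Finset Vertex) (x : Vertex) : Finset Vertex :=
  G.filter fun y => y ≠ ([] : Vertex) ∧ y.dropLast = x.dropLast ∧
    x.getLastD 0 < y.getLastD 0

/-!
Both sides obey the same recursion in the last vertex of an ordering. Removing the last vertex of
a historical ordering of `G` leaves one of `G − x`, where `x` is removable (non-root, childless,
without a later sibling), so `|HIST(G)| = Σₓ |HIST(G − x)|`.

For the formula `H(G)`, cut `G` into its first branch `T = G↓(1)` and the rest `R` (the root with
its other branches, renumbered). The factor of the vertex `(1)` is `a = max(|T| − 1, 1)`,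
`b = max(|R| − 1, 1)`, and every other factor is the one computed inside `T` or `R`; this turns
`(|G| − 2)!` into a binomial coefficient and gives `H(G) = C(|G| − 2, |T| − 1) H(T) H(R)`, the count
of shuffles of an ordering of `T` into one of `R`. Removable vertices of `G` are those of `T` and
those of `R`, so by induction and Pascal's rule `H` obeys the recursion as well.
-/

namespace ROTree

variable {G : Finset Vertex}

lemma concat_dropLast_getLastD {y : Vertex} (h : y ≠ []) : y.dropLast ++ [y.getLastD 0] = y := by
  induction y using List.reverseRecOn with
  | nil => exact absurd rfl h
  | append_singleton p k _ => rw [List.dropLast_concat, List.getLastD_concat]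

lemma isROTree_iff : IsROTree G ↔ [] ∈ G ∧
    ∀ p k, p ++ [k] ∈ G → 1 ≤ k ∧ p ∈ G ∧ (1 < k → p ++ [k - 1] ∈ G) := by
  refine and_congr_right fun _ => ⟨fun h p k hpk => ?_, fun h y hy hne => ?_⟩
  · simpa only [List.dropLast_concat, List.getLastD_concat] using h _ hpk (by simp)
  · rw [← concat_dropLast_getLastD hne] at hy
    exact h _ _ hy

lemma mem_subtreeAt {x z : Vertex} : z ∈ subtreeAt G x ↔ x ++ z ∈ G := by
  simp only [subtreeAt, Finset.mem_image, Finset.mem_filter]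
  constructor
  · rintro ⟨_, ⟨hw, t, rfl⟩, rfl⟩
    rwa [List.drop_left]
  · exact fun h => ⟨x ++ z, ⟨h, z, rfl⟩, List.drop_left⟩

lemma card_subtreeAt (x : Vertex) : (subtreeAt G x).card = (G.filter (x <+: ·)).card := by
  refine Finset.card_image_of_injOn ?_
  intro a ha b hb hab
  obtain ⟨t, rfl⟩ := (Finset.mem_filter.1 ha).2
  obtain ⟨u, rfl⟩ := (Finset.mem_filter.1 hb).2
  simp_all only [List.drop_left]

lemma take_mem (hG : IsROTree G) {y : Vertex} (hy : y ∈ G) (j : ℕ) : y.take j ∈ G := by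
  induction y using List.reverseRecOn with
  | nil => simpa using hy
  | append_singleton p k ih =>
    rcases le_or_gt (p.length + 1) j with hj | hj
    · rwa [List.take_of_length_le (by simpa using hj)]
    · rw [List.take_append_of_le_length (by omega)]
      exact ih ((isROTree_iff.1 hG).2 p k hy).2.1

lemma concat_mem_of_le (hG : IsROTree G) {p : Vertex} {k j : ℕ} (h : p ++ [k] ∈ G)
    (hj : 1 ≤ j) (hjk : j ≤ k) : p ++ [j] ∈ G := by
  induction k with
  | zero => omega
  | succ k ih =>
    rcases hjk.eq_or_lt with rfl | hlt
    · exact h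
    · exact ih (by simpa using ((isROTree_iff.1 hG).2 p _ h).2.2 (by omega)) (by omega)

lemma singleton_mem_of_cons_mem (hG : IsROTree G) {k : ℕ} {t : Vertex} (h : k :: t ∈ G) :
    [k] ∈ G := by
  simpa using take_mem hG h 1

lemma one_le_of_cons_mem (hG : IsROTree G) {k : ℕ} {t : Vertex} (h : k :: t ∈ G) : 1 ≤ k :=
  ((isROTree_iff.1 hG).2 [] k (singleton_mem_of_cons_mem hG h)).1

lemma eq_singleton_nil_of_card_eq_one (hG : IsROTree G) (h : G.card = 1) : G = {[]} := by
  obtain ⟨a, rfl⟩ := Finset.card_eq_one.1 h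
  rw [Finset.mem_singleton.1 hG.1]

lemma singleton_one_mem (hG : IsROTree G) (h : 2 ≤ G.card) : [1] ∈ G := by
  obtain ⟨y, hy, hne⟩ := Finset.exists_mem_ne h []
  obtain ⟨k, t, rfl⟩ := List.exists_cons_of_ne_nil hne
  exact concat_mem_of_le hG (p := []) (singleton_mem_of_cons_mem hG hy) le_rfl
    (one_le_of_cons_mem hG hy)

lemma isROTree_subtreeAt (hG : IsROTree G) {x : Vertex} (hx : x ∈ G) :
    IsROTree (subtreeAt G x) := by
  refine isROTree_iff.2 ⟨by simpa [mem_subtreeAt] using hx, fun p k h => ?_⟩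
  simp only [mem_subtreeAt, ← List.append_assoc] at h ⊢
  exact (isROTree_iff.1 hG).2 _ k h

def predHead : Vertex → Vertex
  | [] => []
  | k :: t => (k - 1) :: t

def succHead : Vertex → Vertex
  | [] => []
  | k :: t => (k + 1) :: t

lemma succHead_injective : Function.Injective succHead
  | [], [], _ => rfl
  | [], _ :: _, h => by simp [succHead] at h
  | _ :: _, [], h => by simp [succHead] at h
  | _ :: _, _ :: _, h => by simp_all [succHead]

def firstBranch (G : Finset Vertex) : Finset Vertex := subtreeAt G [1]

def restBranches (G : Finset Vertex) : Finset Vertex :=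
  (G.filter fun y => ¬ [1] <+: y).image predHead

lemma mem_firstBranch {z : Vertex} : z ∈ firstBranch G ↔ 1 :: z ∈ G := mem_subtreeAt

lemma isROTree_firstBranch (hG : IsROTree G) (h1 : [1] ∈ G) : IsROTree (firstBranch G) :=
  isROTree_subtreeAt hG h1

lemma singleton_prefix_cons_iff {j k : ℕ} {t : Vertex} : [j] <+: k :: t ↔ k = j := by
  simp [List.cons_prefix_cons, eq_comm]

lemma nil_mem_restBranches (hG : IsROTree G) : [] ∈ restBranches G :=
  Finset.mem_image.2 ⟨[], by simp [hG.1], rfl⟩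

lemma exists_of_mem_restBranches (hG : IsROTree G) {z : Vertex} (hz : z ∈ restBranches G)
    (hne : z ≠ []) : ∃ k t, z = k :: t ∧ 1 ≤ k ∧ (k + 1) :: t ∈ G := by
  obtain ⟨w, hw, rfl⟩ := Finset.mem_image.1 hz
  obtain ⟨hwG, hw1⟩ := Finset.mem_filter.1 hw
  obtain ⟨a, r, rfl⟩ := List.exists_cons_of_ne_nil (show w ≠ [] by rintro rfl; exact hne rfl)
  have := one_le_of_cons_mem hG hwG
  rw [singleton_prefix_cons_iff] at hw1
  exact ⟨a - 1, r, rfl, by omega, by rwa [Nat.sub_add_cancel this]⟩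

lemma cons_mem_restBranches (hG : IsROTree G) {k : ℕ} {t : Vertex} (hk : 1 ≤ k) :
    k :: t ∈ restBranches G ↔ (k + 1) :: t ∈ G := by
  refine ⟨fun h => ?_, fun h => Finset.mem_image.2 ⟨(k + 1) :: t, ?_, rfl⟩⟩
  · obtain ⟨_, _, he, -, h⟩ := exists_of_mem_restBranches hG h (List.cons_ne_nil _ _)
    simp_all
  · exact Finset.mem_filter.2 ⟨h, by rw [singleton_prefix_cons_iff]; omega⟩

lemma isROTree_restBranches (hG : IsROTree G) : IsROTree (restBranches G) := by
  refine isROTree_iff.2 ⟨nil_mem_restBranches hG, fun p k h => ?_⟩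
  rcases p with _ | ⟨j, r⟩
  · obtain ⟨_, _, he, hk, h⟩ := exists_of_mem_restBranches hG h (by simp)
    simp only [List.nil_append, List.cons.injEq] at he
    obtain ⟨rfl, rfl⟩ := he
    refine ⟨hk, nil_mem_restBranches hG, fun hlt => ?_⟩
    rw [List.nil_append, cons_mem_restBranches hG (by omega), Nat.sub_add_cancel (by omega)]
    exact concat_mem_of_le hG (p := []) h (by omega) (by omega)
  · obtain ⟨_, _, he, hj, -⟩ := exists_of_mem_restBranches hG h (by simp)
    obtain ⟨rfl, -⟩ := List.cons.inj he
    simp only [List.cons_append, cons_mem_restBranches hG hj] at h ⊢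
    exact (isROTree_iff.1 hG).2 ((j + 1) :: r) k h

lemma card_restBranches (hG : IsROTree G) :
    (restBranches G).card = (G.filter fun y => ¬ [1] <+: y).card := by
  have hinj : Set.InjOn predHead (G.filter fun y => ¬ [1] <+: y) := by
    intro a ha b hb hab
    obtain ⟨haG, ha1⟩ := Finset.mem_filter.1 ha
    obtain ⟨hbG, hb1⟩ := Finset.mem_filter.1 hb
    rcases a with _ | ⟨k, t⟩ <;> rcases b with _ | ⟨j, r⟩ <;>
      simp only [predHead, reduceCtorEq, List.cons.injEq] at hab ⊢
    rw [singleton_prefix_cons_iff] at ha1 hb1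
    have := one_le_of_cons_mem hG haG
    have := one_le_of_cons_mem hG hbG
    exact ⟨by omega, hab.2⟩
  exact Finset.card_image_of_injOn hinj

lemma card_firstBranch_add_card_restBranches (hG : IsROTree G) :
    (firstBranch G).card + (restBranches G).card = G.card := by
  rw [firstBranch, card_subtreeAt, card_restBranches hG, Finset.card_filter_add_card_filter_not]

lemma subtreeAt_firstBranch (x : Vertex) : subtreeAt (firstBranch G) x = subtreeAt G (1 :: x) := by
  ext z
  rw [mem_subtreeAt, mem_subtreeAt, mem_firstBranch, List.cons_append]

lemma subtreeAt_restBranches (hG : IsROTree G) {z : Vertex} (hz : z ∈ restBranches G)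
    (hne : z ≠ []) : subtreeAt (restBranches G) z = subtreeAt G (succHead z) := by
  obtain ⟨j, t, rfl, hj, -⟩ := exists_of_mem_restBranches hG hz hne
  ext w
  rw [mem_subtreeAt, mem_subtreeAt, succHead, List.cons_append, List.cons_append,
    cons_mem_restBranches hG hj]

lemma mem_laterSiblings_concat {p y : Vertex} {k : ℕ} :
    y ∈ laterSiblings G (p ++ [k]) ↔ y ∈ G ∧ ∃ c, k < c ∧ y = p ++ [c] := by
  simp only [laterSiblings, Finset.mem_filter, List.dropLast_concat, List.getLastD_concat]
  refine and_congr_right fun _ => ⟨fun ⟨hne, hp, hk⟩ => ⟨_, hk, ?_⟩, ?_⟩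
  · rw [← hp, concat_dropLast_getLastD hne]
  · rintro ⟨c, hc, rfl⟩
    simpa [List.dropLast_concat, List.getLastD_concat] using hc

lemma mem_laterSiblings_singleton {y : Vertex} {k : ℕ} :
    y ∈ laterSiblings G [k] ↔ y ∈ G ∧ ∃ c, k < c ∧ y = [c] :=
  mem_laterSiblings_concat (p := [])

lemma laterSiblings_cons_one {x : Vertex} (hx : x ≠ []) :
    laterSiblings G (1 :: x) = (laterSiblings (firstBranch G) x).image (1 :: ·) := by
  obtain ⟨p, k, rfl⟩ := (List.eq_nil_or_concat' x).resolve_left hx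
  ext y
  simp only [Finset.mem_image, ← List.cons_append, mem_laterSiblings_concat, mem_firstBranch]
  constructor
  · rintro ⟨hy, c, hc, rfl⟩
    exact ⟨p ++ [c], ⟨hy, c, hc, rfl⟩, rfl⟩
  · rintro ⟨_, ⟨hy, c, hc, rfl⟩, rfl⟩
    exact ⟨hy, c, hc, rfl⟩

lemma laterSiblings_succ_cons (hG : IsROTree G) {j : ℕ} (hj : 1 ≤ j) (t : Vertex) :
    laterSiblings G ((j + 1) :: t) = (laterSiblings (restBranches G) (j :: t)).image succHead := by
  ext y
  simp only [Finset.mem_image]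
  induction t using List.reverseRecOn with
  | nil =>
    simp only [mem_laterSiblings_singleton]
    constructor
    · rintro ⟨hy, c, hc, rfl⟩
      refine ⟨[c - 1], ⟨?_, c - 1, by omega, rfl⟩, by simp [succHead]; omega⟩
      rwa [cons_mem_restBranches hG (by omega), Nat.sub_add_cancel (by omega)]
    · rintro ⟨_, ⟨hy, c, hc, rfl⟩, rfl⟩
      exact ⟨(cons_mem_restBranches hG (by omega)).1 hy, c + 1, by omega, rfl⟩
  | append_singleton r a _ =>
    simp only [← List.cons_append, mem_laterSiblings_concat]
    constructor
    · rintro ⟨hy, c, hc, rfl⟩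
      exact ⟨j :: r ++ [c], ⟨by rwa [List.cons_append, cons_mem_restBranches hG hj], c, hc, rfl⟩,
        rfl⟩
    · rintro ⟨_, ⟨hy, c, hc, rfl⟩, rfl⟩
      rw [List.cons_append, cons_mem_restBranches hG hj] at hy
      exact ⟨hy, c, hc, rfl⟩

noncomputable def hookFactor (G : Finset Vertex) (x : Vertex) : ℝ :=
  ((max ((subtreeAt G x).card - 1) 1 : ℕ) : ℝ)⁻¹ *
    ((max (∑ y ∈ laterSiblings G x, (subtreeAt G y).card) 1 : ℕ) : ℝ)⁻¹

noncomputable def histFormula (G : Finset Vertex) : ℝ :=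
  (Nat.factorial (G.card - 2) : ℝ) * ∏ x ∈ G.erase ([] : Vertex), hookFactor G x

lemma histFormula_singleton_nil : histFormula {[]} = 1 := by
  simp [histFormula]

lemma hookFactor_cons_one {x : Vertex} (hx : x ≠ []) :
    hookFactor G (1 :: x) = hookFactor (firstBranch G) x := by
  simp only [hookFactor, ← subtreeAt_firstBranch, laterSiblings_cons_one hx,
    Finset.sum_image fun _ _ _ _ h => List.cons_injective h]

lemma hookFactor_succHead (hG : IsROTree G) {z : Vertex} (hz : z ∈ restBranches G)
    (hne : z ≠ []) : hookFactor G (succHead z) = hookFactor (restBranches G) z := by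
  obtain ⟨j, t, rfl, hj, -⟩ := exists_of_mem_restBranches hG hz hne
  have hsub : ∀ y ∈ laterSiblings (restBranches G) (j :: t),
      subtreeAt G (succHead y) = subtreeAt (restBranches G) y := fun y hy =>
    have hy := Finset.mem_filter.1 hy
    (subtreeAt_restBranches hG hy.1 hy.2.1).symm
  rw [hookFactor, hookFactor, subtreeAt_restBranches hG hz hne, succHead,
    laterSiblings_succ_cons hG hj, Finset.sum_image succHead_injective.injOn,
    Finset.sum_congr rfl fun y hy => congrArg Finset.card (hsub y hy)]

lemma sum_laterSiblings_singleton_one (hG : IsROTree G) :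
    ∑ y ∈ laterSiblings G [1], (subtreeAt G y).card = (restBranches G).card - 1 := by
  have hsplit : (G.filter fun z => ¬ [1] <+: z).erase [] =
      (laterSiblings G [1]).biUnion fun y => G.filter (y <+: ·) := by
    ext z
    simp only [Finset.mem_erase, Finset.mem_filter, Finset.mem_biUnion,
      mem_laterSiblings_singleton]
    constructor
    · rintro ⟨hne, hz, h1⟩
      obtain ⟨k, t, rfl⟩ := List.exists_cons_of_ne_nil hne
      rw [singleton_prefix_cons_iff] at h1
      have := one_le_of_cons_mem hG hz
      exact ⟨[k], ⟨singleton_mem_of_cons_mem hG hz, k, by omega, rfl⟩, hz, by simp⟩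
    · rintro ⟨_, ⟨-, c, hc, rfl⟩, hz, t, rfl⟩
      exact ⟨by simp, hz, by simp; omega⟩
  have hdisj : (laterSiblings G [1] : Set Vertex).PairwiseDisjoint fun y => G.filter (y <+: ·) := by
    intro y hy y' hy' hne
    obtain ⟨-, c, -, rfl⟩ := mem_laterSiblings_singleton.1 hy
    obtain ⟨-, c', -, rfl⟩ := mem_laterSiblings_singleton.1 hy'
    refine Finset.disjoint_left.2 fun z hz hz' => hne ?_
    obtain ⟨t, rfl⟩ := (Finset.mem_filter.1 hz).2
    simpa [singleton_prefix_cons_iff, eq_comm] using (Finset.mem_filter.1 hz').2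
  rw [card_restBranches hG, ← Finset.card_erase_of_mem (Finset.mem_filter.2 ⟨hG.1, by simp⟩),
    hsplit, Finset.card_biUnion hdisj]
  exact Finset.sum_congr rfl fun y _ => card_subtreeAt y

lemma hookFactor_singleton_one (hG : IsROTree G) :
    hookFactor G [1] = ((max ((firstBranch G).card - 1) 1 : ℕ) : ℝ)⁻¹ *
      ((max ((restBranches G).card - 1) 1 : ℕ) : ℝ)⁻¹ := by
  rw [hookFactor, sum_laterSiblings_singleton_one hG, firstBranch]

lemma erase_nil_filter_prefix_one (h1 : [1] ∈ G) :
    (G.erase []).filter ([1] <+: ·) = insert [1] (((firstBranch G).erase []).image (1 :: ·)) := by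
  ext x
  simp only [Finset.mem_filter, Finset.mem_erase, Finset.mem_insert, Finset.mem_image,
    mem_firstBranch]
  constructor
  · rintro ⟨⟨-, hx⟩, t, rfl⟩
    rcases t with _ | ⟨a, t⟩
    · exact Or.inl rfl
    · exact Or.inr ⟨a :: t, ⟨by simp, hx⟩, rfl⟩
  · rintro (rfl | ⟨t, ⟨-, ht⟩, rfl⟩)
    · exact ⟨⟨by simp, h1⟩, List.prefix_refl _⟩
    · exact ⟨⟨by simp, ht⟩, by simp⟩

lemma erase_nil_filter_not_prefix_one (hG : IsROTree G) :
    (G.erase []).filter (¬ [1] <+: ·) = ((restBranches G).erase []).image succHead := by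
  ext x
  simp only [Finset.mem_filter, Finset.mem_erase, Finset.mem_image]
  constructor
  · rintro ⟨⟨hne, hx⟩, h1⟩
    obtain ⟨k, t, rfl⟩ := List.exists_cons_of_ne_nil hne
    rw [singleton_prefix_cons_iff] at h1
    have := one_le_of_cons_mem hG hx
    refine ⟨(k - 1) :: t, ⟨by simp, ?_⟩, by simp [succHead]; omega⟩
    rwa [cons_mem_restBranches hG (by omega), Nat.sub_add_cancel (by omega)]
  · rintro ⟨z, ⟨hne, hz⟩, rfl⟩
    obtain ⟨j, t, rfl, hj, h⟩ := exists_of_mem_restBranches hG hz hne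
    exact ⟨⟨by simp [succHead], h⟩, by rw [succHead, singleton_prefix_cons_iff]; omega⟩

lemma prod_hookFactor (hG : IsROTree G) (h1 : [1] ∈ G) :
    ∏ x ∈ G.erase [], hookFactor G x = hookFactor G [1] *
      (∏ x ∈ (firstBranch G).erase [], hookFactor (firstBranch G) x) *
        ∏ x ∈ (restBranches G).erase [], hookFactor (restBranches G) x := by
  rw [← Finset.prod_filter_mul_prod_filter_not (G.erase []) ([1] <+: ·),
    erase_nil_filter_prefix_one h1, erase_nil_filter_not_prefix_one hG,
    Finset.prod_insert (by simp), Finset.prod_image fun _ _ _ _ h => List.cons_injective h,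
    Finset.prod_image succHead_injective.injOn,
    Finset.prod_congr rfl fun x hx => hookFactor_cons_one (Finset.ne_of_mem_erase hx),
    Finset.prod_congr rfl fun z hz =>
      hookFactor_succHead hG (Finset.mem_of_mem_erase hz) (Finset.ne_of_mem_erase hz)]

lemma factorial_sub_one_eq (k : ℕ) : (k - 1).factorial = max (k - 1) 1 * (k - 2).factorial := by
  rcases k with _ | _ | k <;> simp [Nat.factorial_succ]

lemma factorial_add_sub_two {m q : ℕ} (hm : 1 ≤ m) (hq : 1 ≤ q) :
    (m + q - 2).factorial = (m + q - 2).choose (m - 1) *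
      (max (m - 1) 1 * (m - 2).factorial) * (max (q - 1) 1 * (q - 2).factorial) := by
  rw [← factorial_sub_one_eq, ← factorial_sub_one_eq, ← Nat.choose_mul_factorial_mul_factorial
    (show m - 1 ≤ m + q - 2 by omega), show m + q - 2 - (m - 1) = q - 1 by omega]

lemma histFormula_eq_choose_mul (hG : IsROTree G) (h2 : 2 ≤ G.card) :
    histFormula G = ((G.card - 2).choose ((firstBranch G).card - 1) : ℝ) *
      histFormula (firstBranch G) * histFormula (restBranches G) := by
  have h1 := singleton_one_mem hG h2
  have hm : 1 ≤ (firstBranch G).card := Finset.card_pos.2 ⟨[], mem_firstBranch.2 h1⟩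
  have hq : 1 ≤ (restBranches G).card := Finset.card_pos.2 ⟨[], nil_mem_restBranches hG⟩
  have hfac := congrArg (Nat.cast (R := ℝ)) (factorial_add_sub_two hm hq)
  have hA : ((max ((firstBranch G).card - 1) 1 : ℕ) : ℝ) ≠ 0 := by positivity
  have hB : ((max ((restBranches G).card - 1) 1 : ℕ) : ℝ) ≠ 0 := by positivity
  rw [histFormula, histFormula, histFormula, prod_hookFactor hG h1, hookFactor_singleton_one hG,
    ← card_firstBranch_add_card_restBranches hG, hfac]
  push_cast
  field_simp

/-- The vertices that can come last in a historical ordering. -/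
def removable (G : Finset Vertex) : Finset Vertex :=
  G.filter fun x => x ≠ [] ∧ x ++ [1] ∉ G ∧ x.dropLast ++ [x.getLastD 0 + 1] ∉ G

lemma concat_mem_removable_iff {p : Vertex} {k : ℕ} :
    p ++ [k] ∈ removable G ↔ p ++ [k] ∈ G ∧ p ++ [k] ++ [1] ∉ G ∧ p ++ [k + 1] ∉ G := by
  simp [removable]

lemma mem_of_mem_removable {x : Vertex} (hx : x ∈ removable G) : x ∈ G :=
  Finset.mem_of_mem_filter x hx

lemma ne_nil_of_mem_removable {x : Vertex} (hx : x ∈ removable G) : x ≠ [] :=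
  (Finset.mem_filter.1 hx).2.1

lemma removable_singleton_nil : removable {[]} = ∅ := by
  simp [removable]

lemma isROTree_erase_iff (hG : IsROTree G) {x : Vertex} (hx : x ∈ G) (hne : x ≠ []) :
    IsROTree (G.erase x) ↔ x ∈ removable G := by
  obtain ⟨p, k, rfl⟩ := (List.eq_nil_or_concat' x).resolve_left hne
  have hG' := (isROTree_iff.1 hG).2
  rw [concat_mem_removable_iff, isROTree_iff]
  constructor
  · rintro ⟨-, hG''⟩
    refine ⟨hx, fun hc => ?_, fun hs => ?_⟩
    · have := (hG'' _ 1 (Finset.mem_erase.2 ⟨by simp, hc⟩)).2.1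
      exact (Finset.mem_erase.1 this).1 rfl
    · have := (hG'' p (k + 1) (Finset.mem_erase.2 ⟨by simp, hs⟩)).2.2
        ((hG' p k hx).1.trans_lt (by omega))
      exact (Finset.mem_erase.1 this).1 rfl
  · rintro ⟨-, hc, hs⟩
    refine ⟨Finset.mem_erase.2 ⟨by simp, hG.1⟩, fun q j hmem => ?_⟩
    obtain ⟨-, hqj⟩ := Finset.mem_erase.1 hmem
    obtain ⟨hj, hq, hprev⟩ := hG' q j hqj
    refine ⟨hj, Finset.mem_erase.2 ⟨?_, hq⟩, fun hlt => Finset.mem_erase.2 ⟨?_, hprev hlt⟩⟩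
    · rintro rfl
      exact hc (concat_mem_of_le hG hqj le_rfl hj)
    · intro he
      obtain ⟨rfl, hjk⟩ := List.append_inj' he rfl
      rw [List.singleton_inj] at hjk
      exact hs (by rwa [← hjk, Nat.sub_add_cancel hj])

lemma isROTree_erase (hG : IsROTree G) {x : Vertex} (hx : x ∈ removable G) :
    IsROTree (G.erase x) :=
  (isROTree_erase_iff hG (mem_of_mem_removable hx) (ne_nil_of_mem_removable hx)).2 hx

lemma cons_one_mem_removable_iff {y : Vertex} (hy : y ≠ []) :
    1 :: y ∈ removable G ↔ y ∈ removable (firstBranch G) := by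
  obtain ⟨p, k, rfl⟩ := (List.eq_nil_or_concat' y).resolve_left hy
  rw [← List.cons_append, concat_mem_removable_iff, concat_mem_removable_iff]
  simp only [mem_firstBranch, List.cons_append]

lemma succHead_mem_removable_iff (hG : IsROTree G) {z : Vertex} (hz : z ∈ restBranches G)
    (hne : z ≠ []) : succHead z ∈ removable G ↔ z ∈ removable (restBranches G) := by
  obtain ⟨j, t, rfl, hj, -⟩ := exists_of_mem_restBranches hG hz hne
  rw [succHead]
  induction t using List.reverseRecOn with
  | nil =>
    rw [← List.nil_append [j + 1], ← List.nil_append [j], concat_mem_removable_iff,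
      concat_mem_removable_iff]
    simp only [List.nil_append, List.cons_append, cons_mem_restBranches hG hj,
      cons_mem_restBranches hG (Nat.le_succ_of_le hj)]
  | append_singleton r a _ =>
    rw [← List.cons_append, ← List.cons_append, concat_mem_removable_iff,
      concat_mem_removable_iff]
    simp only [List.cons_append, cons_mem_restBranches hG hj]

lemma singleton_one_not_mem_removable (hG : IsROTree G) (h3 : 3 ≤ G.card) :
    [1] ∉ removable G := by
  rw [← List.nil_append [1], concat_mem_removable_iff]
  rintro ⟨-, hchild, hsib⟩
  have hsum := card_firstBranch_add_card_restBranches hG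
  rcases le_or_gt 2 (firstBranch G).card with hm | hm
  · have h11 := singleton_one_mem (isROTree_firstBranch hG (singleton_one_mem hG (by omega))) hm
    exact hchild (mem_firstBranch.1 h11)
  · have h1 := singleton_one_mem (isROTree_restBranches hG) (by omega)
    exact hsib ((cons_mem_restBranches hG le_rfl).1 h1)

lemma removable_eq_union (hG : IsROTree G) (h3 : 3 ≤ G.card) :
    removable G = (removable (firstBranch G)).image (1 :: ·) ∪
      (removable (restBranches G)).image succHead := by
  ext x
  simp only [Finset.mem_union, Finset.mem_image]
  constructor
  · intro hx
    obtain ⟨k, t, rfl⟩ := List.exists_cons_of_ne_nil (ne_nil_of_mem_removable hx)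
    have hk := one_le_of_cons_mem hG (mem_of_mem_removable hx)
    rcases hk.eq_or_lt with rfl | hk
    · have ht : t ≠ [] := by
        rintro rfl
        exact singleton_one_not_mem_removable hG h3 hx
      exact Or.inl ⟨t, (cons_one_mem_removable_iff ht).1 hx, rfl⟩
    · have hz : (k - 1) :: t ∈ restBranches G := by
        rw [cons_mem_restBranches hG (by omega), Nat.sub_add_cancel (by omega)]
        exact mem_of_mem_removable hx
      have hs : succHead ((k - 1) :: t) = k :: t := by
        rw [succHead, Nat.sub_add_cancel (by omega)]
      refine Or.inr ⟨_, (succHead_mem_removable_iff hG hz (by simp)).1 ?_, hs⟩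
      rwa [hs]
  · rintro (⟨y, hy, rfl⟩ | ⟨z, hz, rfl⟩)
    · exact (cons_one_mem_removable_iff (ne_nil_of_mem_removable hy)).2 hy
    · exact (succHead_mem_removable_iff hG (mem_of_mem_removable hz)
        (ne_nil_of_mem_removable hz)).2 hz

lemma firstBranch_erase_cons_one (y : Vertex) :
    firstBranch (G.erase (1 :: y)) = (firstBranch G).erase y := by
  ext z
  simp [mem_firstBranch]

lemma firstBranch_erase_succ_cons {j : ℕ} (hj : 1 ≤ j) (t : Vertex) :
    firstBranch (G.erase ((j + 1) :: t)) = firstBranch G := by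
  ext w
  simp only [mem_firstBranch, Finset.mem_erase, ne_eq, List.cons.injEq, and_iff_right_iff_imp]
  omega

lemma restBranches_erase_cons_one (y : Vertex) :
    restBranches (G.erase (1 :: y)) = restBranches G := by
  rw [restBranches, restBranches, Finset.filter_erase, Finset.erase_eq_of_notMem (by simp)]

lemma restBranches_erase_succHead (hG : IsROTree G) {z : Vertex}
    (hz : z ∈ removable (restBranches G)) :
    restBranches (G.erase (succHead z)) = (restBranches G).erase z := by
  have hzG := mem_of_mem_removable hz
  have hne := ne_nil_of_mem_removable hz
  obtain ⟨j, t, rfl, hj, -⟩ := exists_of_mem_restBranches hG hzG hne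
  have hG' : IsROTree (G.erase ((j + 1) :: t)) :=
    isROTree_erase hG ((succHead_mem_removable_iff hG hzG hne).2 hz)
  change restBranches (G.erase ((j + 1) :: t)) = _
  ext w
  rcases w with _ | ⟨k, r⟩
  · simp [nil_mem_restBranches hG', nil_mem_restBranches hG]
  rcases Nat.eq_zero_or_pos k with rfl | hk
  · have h0 := fun H (hH : IsROTree H) (h : 0 :: r ∈ restBranches H) =>
      (one_le_of_cons_mem (isROTree_restBranches hH) h).not_gt Nat.zero_lt_one
    simp only [Finset.mem_erase]
    exact iff_of_false (h0 _ hG') fun h => h0 _ hG h.2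
  · rw [Finset.mem_erase, cons_mem_restBranches hG' hk, cons_mem_restBranches hG hk,
      Finset.mem_erase]
    simp only [ne_eq, List.cons.injEq, Nat.add_right_cancel_iff]

lemma histFormula_erase_cons_one (hG : IsROTree G) (h3 : 3 ≤ G.card) {y : Vertex}
    (hy : y ∈ removable (firstBranch G)) :
    histFormula (G.erase (1 :: y)) = ((G.card - 3).choose ((firstBranch G).card - 2) : ℝ) *
      histFormula ((firstBranch G).erase y) * histFormula (restBranches G) := by
  have hx := (cons_one_mem_removable_iff (ne_nil_of_mem_removable hy)).2 hy
  have hG' : IsROTree (G.erase (1 :: y)) := isROTree_erase hG hx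
  rw [histFormula_eq_choose_mul hG'
      (by rw [Finset.card_erase_of_mem (mem_of_mem_removable hx)]; omega),
    firstBranch_erase_cons_one, restBranches_erase_cons_one,
    Finset.card_erase_of_mem (mem_of_mem_removable hx),
    Finset.card_erase_of_mem (mem_of_mem_removable hy)]
  rfl

lemma histFormula_erase_succHead (hG : IsROTree G) (h3 : 3 ≤ G.card) {z : Vertex}
    (hz : z ∈ removable (restBranches G)) :
    histFormula (G.erase (succHead z)) = ((G.card - 3).choose ((firstBranch G).card - 1) : ℝ) *
      histFormula (firstBranch G) * histFormula ((restBranches G).erase z) := by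
  have hx := (succHead_mem_removable_iff hG (mem_of_mem_removable hz)
    (ne_nil_of_mem_removable hz)).2 hz
  obtain ⟨j, t, rfl, hj, -⟩ :=
    exists_of_mem_restBranches hG (mem_of_mem_removable hz) (ne_nil_of_mem_removable hz)
  rw [histFormula_eq_choose_mul (isROTree_erase hG hx)
      (by rw [Finset.card_erase_of_mem (mem_of_mem_removable hx)]; omega),
    restBranches_erase_succHead hG hz, Finset.card_erase_of_mem (mem_of_mem_removable hx),
    succHead, firstBranch_erase_succ_cons hj]
  rfl

lemma choose_eq_ite_add_ite {m q : ℕ} (hm : 1 ≤ m) (hq : 1 ≤ q) (h3 : 3 ≤ m + q) :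
    (m + q - 2).choose (m - 1) = (if m = 1 then 0 else (m + q - 3).choose (m - 2)) +
      (if q = 1 then 0 else (m + q - 3).choose (m - 1)) := by
  obtain ⟨a, rfl⟩ := Nat.exists_eq_add_of_le' hm
  obtain ⟨b, rfl⟩ := Nat.exists_eq_add_of_le' hq
  rcases a with _ | a <;> rcases b with _ | b
  · omega
  all_goals simp only [show ∀ c d : ℕ, c + 1 + (d + 1) - 2 = c + d from by omega,
    show ∀ c d : ℕ, c + 1 + (d + 1) - 3 = c + d - 1 from by omega]
  · simp
  · simp
  · simp [show a + 1 + (b + 1) = a + b + 1 + 1 by omega, Nat.choose_succ_succ]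

lemma sum_removable_histFormula_of_card_eq_two (hG : IsROTree G) (h2 : G.card = 2) :
    ∑ x ∈ removable G, histFormula (G.erase x) = histFormula G := by
  have h1 := singleton_one_mem hG h2.ge
  have hG2 : G = {[], [1]} := (Finset.eq_of_subset_of_card_le
    (by simp [Finset.insert_subset_iff, hG.1, h1]) (by simp [h2])).symm
  have hrem : removable G = {[1]} := by
    ext x
    rw [Finset.mem_singleton]
    refine ⟨fun hx => ?_, by rintro rfl; simp [removable, hG2]⟩
    have := mem_of_mem_removable hx
    simp only [hG2, Finset.mem_insert, Finset.mem_singleton] at this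
    exact this.resolve_left (ne_nil_of_mem_removable hx)
  have hsum := card_firstBranch_add_card_restBranches hG
  have hm : (firstBranch G).card = 1 := by
    have := Finset.card_pos.2 ⟨[], mem_firstBranch.2 h1⟩
    have := Finset.card_pos.2 ⟨[], nil_mem_restBranches hG⟩
    omega
  rw [hrem, Finset.sum_singleton, histFormula_eq_choose_mul hG h2.ge,
    eq_singleton_nil_of_card_eq_one (isROTree_firstBranch hG h1) hm,
    eq_singleton_nil_of_card_eq_one (isROTree_restBranches hG) (by omega),
    eq_singleton_nil_of_card_eq_one (isROTree_erase hG (hrem ▸ Finset.mem_singleton_self _))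
      (by rw [Finset.card_erase_of_mem h1, h2])]
  simp [histFormula_singleton_nil, h2]

lemma sum_removable_histFormula (hG : IsROTree G) (h2 : 2 ≤ G.card) :
    ∑ x ∈ removable G, histFormula (G.erase x) = histFormula G := by
  induction hn : G.card using Nat.strong_induction_on generalizing G with
  | _ n ih =>
  rcases h2.eq_or_lt with h2 | h3
  · exact sum_removable_histFormula_of_card_eq_two hG h2.symm
  have hsum := card_firstBranch_add_card_restBranches hG
  have h1 := singleton_one_mem hG h2
  have hm : 1 ≤ (firstBranch G).card := Finset.card_pos.2 ⟨[], mem_firstBranch.2 h1⟩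
  have hq : 1 ≤ (restBranches G).card := Finset.card_pos.2 ⟨[], nil_mem_restBranches hG⟩
  -- A one-vertex tree has no removable vertex: its sum is `0`, not `histFormula {[]} = 1`.
  have hIH : ∀ T, IsROTree T → T.card < n →
      ∑ x ∈ removable T, histFormula (T.erase x) = if T.card = 1 then 0 else histFormula T := by
    intro T hT hlt
    split_ifs with hT1
    · rw [eq_singleton_nil_of_card_eq_one hT hT1, removable_singleton_nil, Finset.sum_empty]
    · exact ih _ hlt hT (by have := Finset.card_pos.2 ⟨[], hT.1⟩; omega) rfl
  have hdisj : Disjoint ((removable (firstBranch G)).image (1 :: ·))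
      ((removable (restBranches G)).image succHead) := by
    refine Finset.disjoint_left.2 fun x hx hx' => ?_
    obtain ⟨y, -, rfl⟩ := Finset.mem_image.1 hx
    obtain ⟨z, hz, hzy⟩ := Finset.mem_image.1 hx'
    obtain ⟨j, t, rfl, hj, -⟩ :=
      exists_of_mem_restBranches hG (mem_of_mem_removable hz) (ne_nil_of_mem_removable hz)
    simp only [succHead, List.cons.injEq] at hzy
    omega
  rw [removable_eq_union hG (by omega), Finset.sum_union hdisj,
    Finset.sum_image fun _ _ _ _ h => List.cons_injective h,
    Finset.sum_image succHead_injective.injOn,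
    Finset.sum_congr rfl fun y hy => histFormula_erase_cons_one hG (by omega) hy,
    Finset.sum_congr rfl fun z hz => histFormula_erase_succHead hG (by omega) hz,
    ← Finset.sum_mul, ← Finset.mul_sum, ← Finset.mul_sum,
    hIH _ (isROTree_firstBranch hG h1) (by omega), hIH _ (isROTree_restBranches hG) (by omega),
    histFormula_eq_choose_mul hG h2, ← hsum, choose_eq_ite_add_ite hm hq (by omega)]
  split_ifs <;> push_cast <;> ring

lemma length_of_mem_hist {s : List Vertex} (hs : s ∈ Hist G) : s.length = G.card := by
  rw [← hs.2.1, List.toFinset_card_of_nodup hs.1]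

lemma finite_hist (G : Finset Vertex) : (Hist G).Finite := by
  refine (G.toList.permutations.toFinset.finite_toSet).subset fun s hs => ?_
  rw [Finset.mem_coe, List.mem_toFinset, List.mem_permutations]
  exact (List.perm_ext_iff_of_nodup hs.1 G.nodup_toList).2 fun a => by
    rw [← List.mem_toFinset, hs.2.1, Finset.mem_toList]

lemma concat_mem_hist_iff (hG : IsROTree G) (h2 : 2 ≤ G.card) {s : List Vertex} {x : Vertex} :
    s ++ [x] ∈ Hist G ↔ x ∈ removable G ∧ s ∈ Hist (G.erase x) := by
  have htoFinset : (s ++ [x]).toFinset = insert x s.toFinset := by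
    ext
    simp
  have htake : ∀ i < s.length, (s ++ [x]).take (i + 1) = s.take (i + 1) := fun i hi =>
    List.take_append_of_le_length hi
  constructor
  · intro hsx
    obtain ⟨hnd, hfin, htree⟩ := hsx
    have hxs : x ∉ s := (List.nodup_cons.1 (List.nodup_append_comm.1 hnd)).1
    have hfin' : s.toFinset = G.erase x := by
      rw [← hfin, htoFinset, Finset.erase_insert (by simpa using hxs)]
    have hlen := length_of_mem_hist ⟨hnd, hfin, htree⟩
    simp only [List.length_append, List.length_singleton] at hlen
    have hs : s ∈ Hist (G.erase x) := ⟨hnd.sublist (List.sublist_append_left _ _), hfin',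
      fun i hi => by simpa only [htake i hi] using htree i (by simp; omega)⟩
    have hsT : IsROTree (G.erase x) := by
      simpa [Nat.sub_add_cancel (show 1 ≤ s.length by omega), hfin'] using
        hs.2.2 (s.length - 1) (by omega)
    have hxG : x ∈ G := by simp [← hfin]
    have hxne : x ≠ [] := fun h => (Finset.mem_erase.1 hsT.1).1 h.symm
    exact ⟨(isROTree_erase_iff hG hxG hxne).1 hsT, hs⟩
  · rintro ⟨hx, hnd, hfin, htree⟩
    have hxs : x ∉ s := by simp [← List.mem_toFinset, hfin]
    have hfull : (s ++ [x]).toFinset = G := by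
      rw [htoFinset, hfin, Finset.insert_erase (mem_of_mem_removable hx)]
    refine ⟨List.nodup_append_comm.1 (List.nodup_cons.2 ⟨hxs, hnd⟩), hfull, fun i hi => ?_⟩
    rcases Nat.lt_or_ge i s.length with hi' | hi'
    · rw [htake i hi']
      exact htree i hi'
    · rwa [List.take_of_length_le (by simp; omega), hfull]

lemma card_hist_eq_sum (hG : IsROTree G) (h2 : 2 ≤ G.card) :
    Nat.card (Hist G) = ∑ x ∈ removable G, Nat.card (Hist (G.erase x)) := by
  have hne : ∀ s ∈ Hist G, s ≠ [] := fun s hs h => by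
    have := length_of_mem_hist hs
    simp [h] at this
    omega
  let e : (Σ x : removable G, Hist (G.erase x)) ≃ Hist G := Equiv.ofBijective
    (fun p => ⟨p.2.1 ++ [p.1.1], (concat_mem_hist_iff hG h2).2 ⟨p.1.2, p.2.2⟩⟩) ⟨?_, ?_⟩
  · have := fun x : removable G => (finite_hist (G.erase x)).to_subtype
    rw [← Nat.card_congr e, Nat.card_sigma, Finset.sum_coe_sort (removable G)
      fun x => Nat.card (Hist (G.erase x))]
  · rintro ⟨⟨x, hx⟩, s, hs⟩ ⟨⟨y, hy⟩, t, ht⟩ h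
    obtain ⟨rfl, h⟩ := List.append_inj' (Subtype.ext_iff.1 h) rfl
    obtain rfl := List.singleton_inj.1 h
    rfl
  · rintro ⟨s, hs⟩
    obtain ⟨s, x, rfl⟩ := (List.eq_nil_or_concat' s).resolve_left (hne s hs)
    obtain ⟨hx, hs⟩ := (concat_mem_hist_iff hG h2).1 hs
    exact ⟨⟨⟨x, hx⟩, s, hs⟩, rfl⟩

lemma hist_singleton_nil : Hist {[]} = {[[]]} := by
  ext s
  rw [Set.mem_singleton_iff]
  constructor
  · intro hs
    obtain ⟨a, rfl⟩ := List.length_eq_one_iff.1 (length_of_mem_hist hs)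
    have : a ∈ ({[]} : Finset Vertex) := by simp [← hs.2.1]
    rw [Finset.mem_singleton.1 this]
  · rintro rfl
    refine ⟨by simp, by simp, fun i hi => ?_⟩
    obtain rfl : i = 0 := by simpa using hi
    exact ⟨by simp, by simp⟩

lemma card_hist_eq_histFormula (hG : IsROTree G) : (Nat.card (Hist G) : ℝ) = histFormula G := by
  induction G using Finset.strongInduction with
  | H G ih =>
  rcases Nat.lt_or_ge G.card 2 with h1 | h2
  · have h1 : G.card = 1 := by have := Finset.card_pos.2 ⟨[], hG.1⟩; omega
    rw [eq_singleton_nil_of_card_eq_one hG h1, hist_singleton_nil, histFormula_singleton_nil,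
      Nat.card_coe_set_eq, Set.ncard_singleton, Nat.cast_one]
  · rw [card_hist_eq_sum hG h2, Nat.cast_sum, ← sum_removable_histFormula hG h2]
    exact Finset.sum_congr rfl fun x hx =>
      ih _ (Finset.erase_ssubset (mem_of_mem_removable hx)) (isROTree_erase hG hx)

end ROTree

theorem card_hist_general (G : Finset Vertex) (hG : IsROTree G) :
    (Nat.card ↥(Hist G) : ℝ) =
      (Nat.factorial (G.card - 2) : ℝ) *
        ∏ x ∈ G.erase ([] : Vertex),
          ((max ((subtreeAt G x).card - 1) 1 : ℕ) : ℝ)⁻¹ *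
            ((max (∑ y ∈ laterSiblings G x, (subtreeAt G y).card) 1 : ℕ) : ℝ)⁻¹ :=
  ROTree.card_hist_eq_histFormula hG

/-- The number of historical orderings of a tree `G` with `|G| > 1` is
`|HIST(G)| = (|G|−2)! Π_{x∈G, x≠∅} a(x)⁻¹ b(x)⁻¹`, where
`a(x) = max(|G↓x|−1, 1)` and `b(x) = max(Σ_{y∈B(x)} |G↓y|, 1)`. -/
theorem card_hist (G : Finset Vertex) (hG : IsROTree G) (hcard : 1 < G.card) :
    (Nat.card ↥(Hist G) : ℝ) =
      (Nat.factorial (G.card - 2) : ℝ) *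
        ∏ x ∈ G.erase ([] : Vertex),
          ((max ((subtreeAt G x).card - 1) 1 : ℕ) : ℝ)⁻¹ *
            ((max (∑ y ∈ laterSiblings G x, (subtreeAt G y).card) 1 : ℕ) : ℝ)⁻¹ :=
  card_hist_general G hG
end

section
/- Let β > 0 and consider the linear weight function w(k) = k + β. Then ρ̂(λ) = β/(λ−1) for λ > 1 and ρ̂(λ) = ∞ for 0 < λ ≤ 1; hence λ̲ = 1, condition (M) holds, and the Malthusian parameter is λ* = 1 + β. -/
open scoped Classical BigOperators ENNReal

/-!
For `w(k) = k + β` the `k`-th summand of `ρ̂(λ)` is `c_k = β/(λ+k+β) · Q_k` with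
`Q_n = ∏_{i<n} (i+1+β)/(λ+i+β)`. Since `Q_{n+1} = Q_n (n+1+β)/(λ+n+β)`, the series
telescopes: `∑_{k<n} c_k = β/(λ-1) · (1 - Q_n)`. For `λ > 1`,
`Q_n ≤ exp(-(λ-1) ∑_{i<n} 1/(i+λ+β)) → 0`,
so `ρ̂(λ) = β/(λ-1)`. For `λ ≤ 1` every factor of `Q_n` is at least `1`, so
`c_n ≥ β/(n+1+β)` and the series diverges like the harmonic series.
-/

open Finset Filter Topology

noncomputable def lapTerm (w : ℕ → ℝ) (lam : ℝ) (k : ℕ) : ℝ :=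
  ∏ i ∈ range (k + 1), w i / (lam + w i)

section LaplaceTransform

variable {w : ℕ → ℝ} {lam : ℝ}

lemma lapTerm_nonneg (hw : ∀ i, 0 ≤ w i) (hlam : 0 ≤ lam) (k : ℕ) : 0 ≤ lapTerm w lam k :=
  prod_nonneg fun i _ => div_nonneg (hw i) (add_nonneg hlam (hw i))

lemma lapRho_eq_tsum_lapTerm (hw : ∀ i, 0 ≤ w i) (hlam : 0 ≤ lam) :
    lapRho w lam = ∑' k, ENNReal.ofReal (lapTerm w lam k) :=
  tsum_congr fun _ => (ENNReal.ofReal_prod_of_nonneg fun i _ =>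
    div_nonneg (hw i) (add_nonneg hlam (hw i))).symm

lemma lapRho_eq_ofReal_of_hasSum (hw : ∀ i, 0 ≤ w i) (hlam : 0 ≤ lam) {a : ℝ}
    (h : HasSum (lapTerm w lam) a) : lapRho w lam = ENNReal.ofReal a := by
  rw [lapRho_eq_tsum_lapTerm hw hlam, ← ENNReal.ofReal_tsum_of_nonneg
    (lapTerm_nonneg hw hlam) h.summable, h.tsum_eq]

lemma lapRho_eq_top_of_not_summable (hw : ∀ i, 0 ≤ w i) (hlam : 0 ≤ lam)
    (h : ¬Summable (lapTerm w lam)) : lapRho w lam = ∞ := by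
  rw [lapRho_eq_tsum_lapTerm hw hlam]
  by_contra hfin
  exact h <| (ENNReal.summable_toReal hfin).congr fun k =>
    ENNReal.toReal_ofReal (lapTerm_nonneg hw hlam k)

end LaplaceTransform

lemma not_summable_one_div_nat_add {a : ℝ} (ha : 0 ≤ a) :
    ¬Summable fun n : ℕ => 1 / ((n : ℝ) + a) := by
  refine fun hs => (Real.summable_one_div_nat_add_rpow a 1).not.mpr (lt_irrefl 1) ?_
  refine hs.congr fun n => ?_
  rw [Real.rpow_one, abs_of_nonneg (by positivity)]

lemma tendsto_sum_range_one_div_nat_add_atTop {a : ℝ} (ha : 0 ≤ a) :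
    Tendsto (fun n => ∑ i ∈ range n, 1 / ((i : ℝ) + a)) atTop atTop :=
  (not_summable_iff_tendsto_nat_atTop_of_nonneg fun i => by positivity).mp
    (not_summable_one_div_nat_add ha)

section LinearWeight

variable {beta lam : ℝ}

/-- `Γ(n+1+β) Γ(λ+β) / (Γ(1+β) Γ(n+λ+β))`, as a finite product. -/
noncomputable def gammaRatio (beta lam : ℝ) (n : ℕ) : ℝ :=
  ∏ i ∈ range n, ((i : ℝ) + 1 + beta) / (lam + i + beta)

lemma gammaRatio_succ (n : ℕ) :
    gammaRatio beta lam (n + 1)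
      = gammaRatio beta lam n * ((n + 1 + beta) / (lam + n + beta)) :=
  prod_range_succ _ n

lemma lapTerm_linear (n : ℕ) :
    lapTerm (fun k => (k : ℝ) + beta) lam n
      = beta / (lam + n + beta) * gammaRatio beta lam n := by
  induction n with
  | zero => simp [lapTerm, gammaRatio]
  | succ n ih =>
    rw [lapTerm, prod_range_succ, ← lapTerm, ih, gammaRatio_succ]
    push_cast
    ring

lemma sum_range_lapTerm_linear (hpos : 0 < lam + beta) (hlam : lam ≠ 1) (n : ℕ) :
    ∑ k ∈ range n, lapTerm (fun k => (k : ℝ) + beta) lam k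
      = beta / (lam - 1) * (1 - gammaRatio beta lam n) := by
  induction n with
  | zero => simp [gammaRatio]
  | succ n ih =>
    have hn : 0 < lam + n + beta := by linarith [n.cast_nonneg (α := ℝ)]
    have hlam_sub : lam - 1 ≠ 0 := sub_ne_zero.mpr hlam
    rw [sum_range_succ, ih, lapTerm_linear, gammaRatio_succ]
    field_simp [hn.ne']
    ring

lemma gammaRatio_nonneg (hb : 0 ≤ beta) (hlam : 0 ≤ lam) (n : ℕ) :
    0 ≤ gammaRatio beta lam n :=
  prod_nonneg fun i _ => by positivity

lemma one_le_gammaRatio (hpos : 0 < lam + beta) (hlam : lam ≤ 1) (n : ℕ) :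
    1 ≤ gammaRatio beta lam n :=
  one_le_prod fun i _ => (one_le_div (by linarith [i.cast_nonneg (α := ℝ)])).mpr (by linarith)

lemma gammaRatio_le_exp (hb : 0 ≤ beta) (hlam : 0 < lam) (n : ℕ) :
    gammaRatio beta lam n
      ≤ Real.exp (-((lam - 1) * ∑ i ∈ range n, 1 / ((i : ℝ) + (lam + beta)))) := by
  rw [mul_sum, ← sum_neg_distrib, Real.exp_sum]
  refine prod_le_prod (fun i _ => by positivity) fun i _ => ?_
  have hfactor : ((i : ℝ) + 1 + beta) / (lam + i + beta)
      = -((lam - 1) * (1 / ((i : ℝ) + (lam + beta)))) + 1 := by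
    field_simp
    ring
  exact hfactor ▸ Real.add_one_le_exp _

lemma tendsto_gammaRatio_zero (hb : 0 ≤ beta) (hlam : 1 < lam) :
    Tendsto (gammaRatio beta lam) atTop (𝓝 0) := by
  have hexp := Real.tendsto_exp_atBot.comp <| tendsto_neg_atTop_atBot.comp <|
    (tendsto_sum_range_one_div_nat_add_atTop (by linarith : 0 ≤ lam + beta)).const_mul_atTop
      (sub_pos.mpr hlam)
  exact squeeze_zero (gammaRatio_nonneg hb (by linarith)) (gammaRatio_le_exp hb (by linarith))
    hexp

lemma hasSum_lapTerm_linear (hb : 0 ≤ beta) (hlam : 1 < lam) :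
    HasSum (lapTerm (fun k => (k : ℝ) + beta) lam) (beta / (lam - 1)) := by
  rw [hasSum_iff_tendsto_nat_of_nonneg (lapTerm_nonneg (fun i => by positivity) (by linarith))]
  have h := ((tendsto_gammaRatio_zero hb hlam).const_sub 1).const_mul (beta / (lam - 1))
  rw [sub_zero, mul_one] at h
  exact h.congr fun n => (sum_range_lapTerm_linear (by linarith) hlam.ne' n).symm

lemma not_summable_lapTerm_linear (hb : 0 < beta) (hpos : 0 < lam + beta) (hlam : lam ≤ 1) :
    ¬Summable (lapTerm (fun k => (k : ℝ) + beta) lam) := by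
  intro hs
  have hle : ∀ n : ℕ,
      beta * (1 / ((n : ℝ) + (1 + beta))) ≤ lapTerm (fun k => (k : ℝ) + beta) lam n := by
    intro n
    have hn : 0 < lam + n + beta := by linarith [n.cast_nonneg (α := ℝ)]
    rw [lapTerm_linear, mul_one_div]
    calc beta / ((n : ℝ) + (1 + beta)) ≤ beta / (lam + n + beta) :=
          div_le_div_of_nonneg_left hb.le hn (by linarith)
      _ ≤ beta / (lam + n + beta) * gammaRatio beta lam n :=
          le_mul_of_one_le_right (by positivity) (one_le_gammaRatio hpos hlam n)
  refine not_summable_one_div_nat_add (by linarith : (0 : ℝ) ≤ 1 + beta) ?_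
  exact (summable_mul_left_iff hb.ne').mp <|
    hs.of_nonneg_of_le (fun n => by positivity) hle

lemma lapRho_linear_of_one_lt (hb : 0 ≤ beta) (hlam : 1 < lam) :
    lapRho (fun k => (k : ℝ) + beta) lam = ENNReal.ofReal (beta / (lam - 1)) :=
  lapRho_eq_ofReal_of_hasSum (fun i => by positivity) (by linarith)
    (hasSum_lapTerm_linear hb hlam)

lemma lapRho_linear_of_le_one (hb : 0 < beta) (hlam₀ : 0 < lam) (hlam₁ : lam ≤ 1) :
    lapRho (fun k => (k : ℝ) + beta) lam = ∞ :=
  lapRho_eq_top_of_not_summable (fun i => by positivity) hlam₀.le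
    (not_summable_lapTerm_linear hb (by linarith) hlam₁)

lemma setOf_lapRho_linear_ne_top (hb : 0 < beta) :
    {lam : ℝ | 0 < lam ∧ lapRho (fun k => (k : ℝ) + beta) lam ≠ ∞} = Set.Ioi 1 := by
  ext lam
  constructor
  · exact fun ⟨hlam₀, hfin⟩ => not_le.mp fun hlam₁ =>
      hfin (lapRho_linear_of_le_one hb hlam₀ hlam₁)
  · intro hlam
    refine ⟨zero_lt_one.trans hlam, ?_⟩
    rw [lapRho_linear_of_one_lt hb.le hlam]
    exact ENNReal.ofReal_ne_top

lemma lowerLam_linear (hb : 0 < beta) : lowerLam (fun k => (k : ℝ) + beta) = 1 := by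
  rw [lowerLam, setOf_lapRho_linear_ne_top hb]
  exact csInf_Ioi

lemma condM_linear (hb : 0 < beta) : CondM (fun k => (k : ℝ) + beta) := by
  refine ⟨setOf_lapRho_linear_ne_top hb ▸ Set.nonempty_Ioi, ?_⟩
  have hval : lapRho (fun k => (k : ℝ) + beta) (1 + beta / 2) = 2 := by
    rw [lapRho_linear_of_one_lt hb.le (by linarith), add_sub_cancel_left,
      div_div_cancel₀ hb.ne', ENNReal.ofReal_ofNat]
  calc (1 : ℝ≥0∞) < 2 := ENNReal.one_lt_two
    _ = lapRho (fun k => (k : ℝ) + beta) (1 + beta / 2) := hval.symm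
    _ ≤ ⨆ lam ∈ Set.Ioi (lowerLam fun k => (k : ℝ) + beta),
          lapRho (fun k => (k : ℝ) + beta) lam :=
      le_iSup₂_of_le (1 + beta / 2) (by rw [lowerLam_linear hb]; simpa using hb) le_rfl

end LinearWeight

/-- For the linear weight function `w(k) = k + β` (`β > 0`):
`ρ̂(λ) = β/(λ−1)` for `λ > 1`, `ρ̂(λ) = ∞` for `0 < λ ≤ 1`, hence `λ̲ = 1`,
condition (M) holds, and the Malthusian parameter is `λ* = 1 + β`. -/
theorem linear_weight_malthusian (beta : ℝ) (hbeta : 0 < beta) :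
    (∀ lam : ℝ, 1 < lam →
      lapRho (fun k => (k : ℝ) + beta) lam = ENNReal.ofReal (beta / (lam - 1))) ∧
    (∀ lam : ℝ, 0 < lam → lam ≤ 1 →
      lapRho (fun k => (k : ℝ) + beta) lam = ∞) ∧
    lowerLam (fun k => (k : ℝ) + beta) = 1 ∧
    CondM (fun k => (k : ℝ) + beta) ∧
    lowerLam (fun k => (k : ℝ) + beta) < 1 + beta ∧
    lapRho (fun k => (k : ℝ) + beta) (1 + beta) = 1 := by
  refine ⟨fun lam hlam => lapRho_linear_of_one_lt hbeta.le hlam,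
    fun lam hlam₀ hlam₁ => lapRho_linear_of_le_one hbeta hlam₀ hlam₁, lowerLam_linear hbeta,
    condM_linear hbeta, by linarith [lowerLam_linear hbeta], ?_⟩
  rw [lapRho_linear_of_one_lt hbeta.le (by linarith), add_sub_cancel_left, div_self hbeta.ne',
    ENNReal.ofReal_one]
end

section
/- Let β > 0 and w(k) = k + β, so that λ* = 1 + β. Then the asymptotic degree distribution p_w(k) = (λ*/(λ*+w(k))) Π_{i=0}^{k−1} w(i)/(λ*+w(i)) satisfies p_w(k) = (1+β) · (k−1+β)^{(k)} / (k+1+2β)^{(k+1)} for all k ∈ ℕ, where x^{(k)} = x(x−1)⋯(x−k+1) = Γ(x+1)/Γ(x−k+1) denotes the falling factorial. In particular, for β = 1: p_w(k) = 4/((k+1)(k+2)(k+3)). -/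
open scoped Classical BigOperators ENNReal

/-- the falling factorial `x^{(k)} = x(x−1)⋯(x−k+1)` -/
noncomputable def fallFac (x : ℝ) (k : ℕ) : ℝ := ∏ i ∈ Finset.range k, (x - i)

open Finset

/-! With `w(n) = n + β`, the `i`-th factor of `p_w(k)` is `(β + i)/(λ + β + i)`, so
`p_w(k) = λ ∏_{i<k} (β + i) / ∏_{i≤k} (λ + β + i)` for every `λ`, and both products are
falling factorials read from the bottom up. For `β = 1`, `λ = 2` the quotient
`∏_{i<k} (1 + i) / ∏_{i<k} (3 + i)` telescopes to `2/((k + 1)(k + 2))`. -/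

theorem fallFac_eq_prod_range_add (x : ℝ) (k : ℕ) :
    fallFac x k = ∏ i ∈ range k, (x - k + 1 + i) := by
  rw [fallFac, ← prod_range_reflect]
  refine prod_congr rfl fun i hi => ?_
  rw [mem_range] at hi
  rw [Nat.sub_sub, Nat.cast_sub (by omega), Nat.cast_add, Nat.cast_one]
  ring

theorem pW_add_const_eq_div_prod (beta lam : ℝ) (k : ℕ) :
    pW (fun n => (n : ℝ) + beta) lam k =
      lam * (∏ i ∈ range k, ((i : ℝ) + beta)) / ∏ i ∈ range (k + 1), (lam + (i + beta)) := by
  rw [pW, prod_div_distrib, prod_range_succ, div_mul_div_comm, mul_comm (lam + _)]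

theorem prod_range_add_mul_eq_mul_prod_range_add_two (x : ℝ) (k : ℕ) :
    (∏ i ∈ range k, ((i : ℝ) + x)) * ((k + x) * (k + x + 1)) =
      x * (x + 1) * ∏ i ∈ range k, ((i : ℝ) + (x + 2)) := by
  calc _ = ∏ i ∈ range (k + 2), ((i : ℝ) + x) := by
        rw [prod_range_succ, prod_range_succ]; push_cast; ring
    _ = _ := by
        rw [prod_range_succ', prod_range_succ', prod_congr rfl fun i _ =>
          show ((i + 1 + 1 : ℕ) : ℝ) + x = i + (x + 2) by push_cast; ring]
        push_cast; ring

theorem pW_add_const_one_add_eq_fallFac (beta : ℝ) (k : ℕ) :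
    pW (fun n => (n : ℝ) + beta) (1 + beta) k =
      (1 + beta) * fallFac ((k : ℝ) - 1 + beta) k /
        fallFac ((k : ℝ) + 1 + 2 * beta) (k + 1) := by
  rw [pW_add_const_eq_div_prod, fallFac_eq_prod_range_add, fallFac_eq_prod_range_add,
    prod_congr rfl fun (i : ℕ) _ => show (k : ℝ) - 1 + beta - k + 1 + i = i + beta by ring,
    prod_congr rfl fun (i : ℕ) _ => show (k : ℝ) + 1 + 2 * beta - (k + 1 : ℕ) + 1 + i =
      1 + beta + (i + beta) by push_cast; ring]

theorem pW_add_one_two (k : ℕ) :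
    pW (fun n => (n : ℝ) + 1) 2 k = 4 / (((k : ℝ) + 1) * ((k : ℝ) + 2) * ((k : ℝ) + 3)) := by
  have telescope := prod_range_add_mul_eq_mul_prod_range_add_two 1 k
  rw [pW_add_const_eq_div_prod, prod_range_succ,
    prod_congr rfl fun (i : ℕ) _ => show (2 : ℝ) + (i + 1) = i + (1 + 2) by ring]
  generalize ∏ i ∈ range k, ((i : ℝ) + 1) = P at telescope ⊢
  generalize hQ : ∏ i ∈ range k, ((i : ℝ) + (1 + 2)) = Q at telescope ⊢
  have : Q ≠ 0 := hQ ▸ prod_ne_zero_iff.2 fun i _ => by positivity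
  field_simp
  linear_combination (2 * (k + 3 : ℝ)) * telescope

theorem linear_degree_distribution_general (beta : ℝ) :
    (∀ k : ℕ, pW (fun n => (n : ℝ) + beta) (1 + beta) k =
      (1 + beta) * fallFac ((k : ℝ) - 1 + beta) k /
        fallFac ((k : ℝ) + 1 + 2 * beta) (k + 1)) ∧
    (∀ k : ℕ, pW (fun n => (n : ℝ) + 1) 2 k =
      4 / (((k : ℝ) + 1) * ((k : ℝ) + 2) * ((k : ℝ) + 3))) :=
  ⟨pW_add_const_one_add_eq_fallFac beta, pW_add_one_two⟩

/-- For the linear weight `w(k) = k + β` with Malthusian parameter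
`λ* = 1 + β`, the asymptotic degree distribution is
`p_w(k) = (1+β)(k−1+β)^{(k)}/(k+1+2β)^{(k+1)}`; in particular for `β = 1`,
`p_w(k) = 4/((k+1)(k+2)(k+3))`. -/
theorem linear_degree_distribution (beta : ℝ) (hbeta : 0 < beta) :
    (∀ k : ℕ, pW (fun n => (n : ℝ) + beta) (1 + beta) k =
      (1 + beta) * fallFac ((k : ℝ) - 1 + beta) k /
        fallFac ((k : ℝ) + 1 + 2 * beta) (k + 1)) ∧
    (∀ k : ℕ, pW (fun n => (n : ℝ) + 1) 2 k =
      4 / (((k : ℝ) + 1) * ((k : ℝ) + 2) * ((k : ℝ) + 3))) :=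
  linear_degree_distribution_general beta
end
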